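/- arXiv:1503.04095 — 4 statements merged into one kernel-verified Lean document; each statement's English description precedes it below -/
import Mathlib

section
/- Let r ≥ 1 be an integer and let K_r = {g ∈ GL_n(ℤ_p) : every entry of g − 1 has p-adic absolute value ≤ p^{−r}} be the kernel of the reduction map GL_n(ℤ_p) → GL_n(ℤ/p^r). Then for any function φ : ℚ_p^n \ {0} → ℂ the following three conditions are equivalent: (i) φ(gξ) = φ(ξ) for all g ∈ K_r with det g = 1 and all ξ ∈ ℚ_p^n \ {0}; (ii) φ(ξ') = φ(ξ) for all ξ, ξ' ∈ ℚ_p^n \ {0} satisfying ‖ξ' − ξ‖ ≤ p^{−r}·‖ξ‖; (iii) φ(gξ) = φ(ξ) for all g ∈ K_r and all ξ ∈ ℚ_p^n \ {0}. -/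
open scoped MatrixGroups

noncomputable section

/-- The action of `g ∈ GL_n(ℤ_p)` on `ℚ_p^n` by matrix multiplication. -/
def glAct (p : ℕ) [Fact p.Prime] (n : ℕ) (g : GL (Fin n) ℤ_[p]) (ξ : Fin n → ℚ_[p]) :
    Fin n → ℚ_[p] :=
  Matrix.mulVec (Matrix.of fun i j => (((g : Matrix (Fin n) (Fin n) ℤ_[p]) i j : ℚ_[p]))) ξ

/-- The congruence subgroup `K_r`: elements `g` of `GL_n(ℤ_p)` such that every entry of
`g − 1` has absolute value at most `p^{−r}`. -/
def Kr (p : ℕ) [Fact p.Prime] (n r : ℕ) : Set (GL (Fin n) ℤ_[p]) :=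
  {g | ∀ i j, ‖((g : Matrix (Fin n) (Fin n) ℤ_[p]) - 1) i j‖ ≤ (p : ℝ) ^ (-(r : ℤ))}

/-!
For `g ∈ K_r` every entry of `g - 1` has norm at most `p^{-r}`, so the ultrametric inequality
gives `‖gξ - ξ‖ ≤ p^{-r} ‖ξ‖`; hence (ii) implies (i) and (iii). Conversely the orbit of `ξ`
under `K_r ∩ SL_n(ℤ_p)` is the whole ball `‖ξ' - ξ‖ ≤ p^{-r} ‖ξ‖`. Choose `i₀` with
`‖ξ_{i₀}‖ = ‖ξ‖` and `i₁ ≠ i₀`. The diagonal matrix with entries `c = ξ'_{i₀} / ξ_{i₀}` at `i₀`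
and `c⁻¹` at `i₁` corrects the `i₀`-th coordinate, then `1 + v e_{i₀}ᵀ` with `v_{i₀} = 0` corrects
the others; both lie in `K_r` since `‖c - 1‖ ≤ p^{-r}` and `‖v_i‖ ≤ p^{-r}`.
-/

open Matrix

theorem Matrix.norm_mulVec_le_of_forall_norm_le {R m l : Type*} [NormedRing R]
    [IsUltrametricDist R] [Fintype m] [Fintype l] {M : Matrix m l R} {ε : ℝ} (hε : 0 ≤ ε)
    (hM : ∀ i j, ‖M i j‖ ≤ ε) (v : l → R) : ‖M *ᵥ v‖ ≤ ε * ‖v‖ := by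
  refine (pi_norm_le_iff_of_nonneg (by positivity)).2 fun i => ?_
  refine IsUltrametricDist.norm_sum_le_of_forall_le_of_nonneg (by positivity) fun j _ => ?_
  exact (norm_mul_le _ _).trans (mul_le_mul (hM i j) (norm_le_pi_norm v j) (norm_nonneg _) hε)

theorem PadicInt.norm_le_pow_iff_toZModPow_eq_zero {p : ℕ} [Fact p.Prime] (x : ℤ_[p]) (r : ℕ) :
    ‖x‖ ≤ (p : ℝ) ^ (-(r : ℤ)) ↔ toZModPow r x = 0 := by
  rw [norm_le_pow_iff_mem_span_pow, ← ker_toZModPow, RingHom.mem_ker]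

section Padic

variable {p : ℕ} [Fact p.Prime] {n r : ℕ}

theorem prime_zpow_neg_le_one : (p : ℝ) ^ (-(r : ℤ)) ≤ 1 :=
  zpow_le_one_of_nonpos₀ (by exact_mod_cast (Fact.out : p.Prime).one_lt.le) (by omega)

theorem prime_zpow_neg_lt_one (hr : 1 ≤ r) : (p : ℝ) ^ (-(r : ℤ)) < 1 :=
  zpow_lt_one_of_neg₀ (by exact_mod_cast (Fact.out : p.Prime).one_lt) (by omega)

theorem mem_Kr_iff_mapMatrix_toZModPow_eq_one {g : GL (Fin n) ℤ_[p]} :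
    g ∈ Kr p n r ↔ (PadicInt.toZModPow r).mapMatrix (g : Matrix (Fin n) (Fin n) ℤ_[p]) = 1 := by
  rw [← sub_eq_zero, ← map_one (PadicInt.toZModPow r).mapMatrix, ← map_sub, ← Matrix.ext_iff]
  simp only [Kr, Set.mem_ofPred_eq, PadicInt.norm_le_pow_iff_toZModPow_eq_zero]
  rfl

theorem mul_mem_Kr {g h : GL (Fin n) ℤ_[p]} (hg : g ∈ Kr p n r) (hh : h ∈ Kr p n r) :
    g * h ∈ Kr p n r := by
  rw [mem_Kr_iff_mapMatrix_toZModPow_eq_one] at hg hh ⊢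
  rw [Units.val_mul, map_mul, hg, hh, one_mul]

theorem glAct_eq_mapMatrix_mulVec (g : GL (Fin n) ℤ_[p]) (ξ : Fin n → ℚ_[p]) :
    glAct p n g ξ = PadicInt.Coe.ringHom.mapMatrix (g : Matrix (Fin n) (Fin n) ℤ_[p]) *ᵥ ξ :=
  rfl

theorem glAct_mul (g h : GL (Fin n) ℤ_[p]) (ξ : Fin n → ℚ_[p]) :
    glAct p n (g * h) ξ = glAct p n g (glAct p n h ξ) := by
  simp only [glAct_eq_mapMatrix_mulVec, Units.val_mul, map_mul, mulVec_mulVec]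

theorem norm_glAct_sub_le {g : GL (Fin n) ℤ_[p]} (hg : g ∈ Kr p n r) (ξ : Fin n → ℚ_[p]) :
    ‖glAct p n g ξ - ξ‖ ≤ (p : ℝ) ^ (-(r : ℤ)) * ‖ξ‖ := by
  have hsub : glAct p n g ξ - ξ =
      PadicInt.Coe.ringHom.mapMatrix ((g : Matrix (Fin n) (Fin n) ℤ_[p]) - 1) *ᵥ ξ := by
    rw [map_sub, map_one, sub_mulVec, one_mulVec, glAct_eq_mapMatrix_mulVec]
  rw [hsub]
  refine norm_mulVec_le_of_forall_norm_le (by positivity) (fun i j => ?_) ξ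
  exact hg i j

theorem glAct_ne_zero (hr : 1 ≤ r) {g : GL (Fin n) ℤ_[p]} (hg : g ∈ Kr p n r)
    {ξ : Fin n → ℚ_[p]} (hξ : ξ ≠ 0) : glAct p n g ξ ≠ 0 := by
  intro h
  have hlt : (p : ℝ) ^ (-(r : ℤ)) * ‖ξ‖ < ‖ξ‖ :=
    mul_lt_of_lt_one_left (norm_pos_iff.2 hξ) (prime_zpow_neg_lt_one hr)
  have := norm_glAct_sub_le hg ξ
  rw [h, zero_sub, norm_neg] at this
  exact this.not_gt hlt

theorem exists_mem_Kr_det_eq_one_glAct_eq_mulVec {M : Matrix (Fin n) (Fin n) ℚ_[p]}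
    (hM : ∀ i j, ‖(M - 1) i j‖ ≤ (p : ℝ) ^ (-(r : ℤ))) (hdet : M.det = 1) :
    ∃ g ∈ Kr p n r, (g : Matrix (Fin n) (Fin n) ℤ_[p]).det = 1 ∧
      ∀ ξ, glAct p n g ξ = M *ᵥ ξ := by
  have hint : ∀ i j, ‖M i j‖ ≤ 1 := fun i j =>
    calc ‖M i j‖ = ‖(M - 1) i j + (1 : Matrix (Fin n) (Fin n) ℚ_[p]) i j‖ := by simp
      _ ≤ max ‖(M - 1) i j‖ ‖(1 : Matrix (Fin n) (Fin n) ℚ_[p]) i j‖ :=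
        IsUltrametricDist.norm_add_le_max _ _
      _ ≤ 1 := max_le ((hM i j).trans prime_zpow_neg_le_one)
        (by rw [one_apply]; split_ifs <;> simp)
  set G : Matrix (Fin n) (Fin n) ℤ_[p] := Matrix.of fun i j => ⟨M i j, hint i j⟩
  have hGM : PadicInt.Coe.ringHom.mapMatrix G = M := rfl
  have hGdet : G.det = 1 := by
    have := RingHom.map_det PadicInt.Coe.ringHom G
    rw [hGM, hdet] at this
    exact Subtype.ext this
  refine ⟨Matrix.SpecialLinearGroup.toGL ⟨G, hGdet⟩, fun i j => ?_, hGdet, fun ξ => ?_⟩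
  · have := hM i j
    rwa [← hGM, ← map_one PadicInt.Coe.ringHom.mapMatrix, ← map_sub] at this
  · exact congrArg (· *ᵥ ξ) hGM

theorem exists_mem_Kr_det_eq_one_glAct_apply_eq (hr : 1 ≤ r) {i₀ i₁ : Fin n} (hi : i₁ ≠ i₀)
    {ξ : Fin n → ℚ_[p]} (hξ : ξ i₀ ≠ 0) {x : ℚ_[p]}
    (hx : ‖x - ξ i₀‖ ≤ (p : ℝ) ^ (-(r : ℤ)) * ‖ξ i₀‖) :
    ∃ g ∈ Kr p n r, (g : Matrix (Fin n) (Fin n) ℤ_[p]).det = 1 ∧ glAct p n g ξ i₀ = x := by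
  set c := x / ξ i₀
  have hc : ‖c - 1‖ ≤ (p : ℝ) ^ (-(r : ℤ)) := by
    rwa [div_sub_one hξ, norm_div, div_le_iff₀ (norm_pos_iff.2 hξ)]
  have hc₁ : ‖c‖ = 1 := by
    simpa using Padic.norm_eq_of_norm_sub_lt_right
      (hc.trans_lt (prime_zpow_neg_lt_one hr) |>.trans_eq norm_one.symm)
  have hc₀ : c ≠ 0 := norm_ne_zero_iff.1 (by rw [hc₁]; exact one_ne_zero)
  have hcinv : ‖c⁻¹ - 1‖ ≤ (p : ℝ) ^ (-(r : ℤ)) := by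
    rwa [show c⁻¹ - 1 = -(c - 1) / c by field_simp; ring, norm_div, norm_neg, hc₁, div_one]
  set d : Fin n → ℚ_[p] := Pi.mulSingle i₀ c * Pi.mulSingle i₁ c⁻¹
  have hdM : ∀ i j, ‖(diagonal d - 1) i j‖ ≤ (p : ℝ) ^ (-(r : ℤ)) := by
    intro i j
    rw [Matrix.sub_apply, diagonal_apply, one_apply]
    split_ifs
    · simp only [d, Pi.mul_apply, Pi.mulSingle_apply]
      split_ifs <;> simp_all
    · simp
  have hdet : (diagonal d).det = 1 := by
    simp only [det_diagonal, d, Pi.mul_apply]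
    rw [Finset.prod_mul_distrib, Fintype.prod_pi_mulSingle',
      Fintype.prod_pi_mulSingle', mul_inv_cancel₀ hc₀]
  obtain ⟨g, hg, hgdet, hgξ⟩ := exists_mem_Kr_det_eq_one_glAct_eq_mulVec hdM hdet
  refine ⟨g, hg, hgdet, ?_⟩
  rw [hgξ, mulVec_diagonal]
  simp [d, hi.symm, c, hξ]

theorem exists_mem_Kr_det_eq_one_glAct_eq_of_apply_eq {i₀ : Fin n} {ζ ζ' : Fin n → ℚ_[p]}
    (hζ : ζ i₀ ≠ 0) (h₀ : ζ' i₀ = ζ i₀) (hd : ‖ζ' - ζ‖ ≤ (p : ℝ) ^ (-(r : ℤ)) * ‖ζ i₀‖) :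
    ∃ g ∈ Kr p n r, (g : Matrix (Fin n) (Fin n) ℤ_[p]).det = 1 ∧ glAct p n g ζ = ζ' := by
  set v := (ζ i₀)⁻¹ • (ζ' - ζ)
  have hv : ∀ i, ‖v i‖ ≤ (p : ℝ) ^ (-(r : ℤ)) := fun i => by
    simp only [v, Pi.smul_apply, smul_eq_mul, norm_mul, norm_inv]
    rw [inv_mul_le_iff₀ (norm_pos_iff.2 hζ), mul_comm]
    exact (norm_le_pi_norm _ i).trans hd
  have hv₀ : v i₀ = 0 := by simp [v, h₀]
  set e : Fin n → ℚ_[p] := Pi.single i₀ 1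
  have he : ∀ j, ‖e j‖ ≤ 1 := fun j => by
    simp only [e, Pi.single_apply]
    split_ifs <;> simp
  have hM : ∀ i j, ‖(1 + vecMulVec v e - 1) i j‖ ≤ (p : ℝ) ^ (-(r : ℤ)) := fun i j => by
    rw [add_sub_cancel_left, vecMulVec_apply, norm_mul]
    exact (mul_le_of_le_one_right (norm_nonneg _) (he j)).trans (hv i)
  have hdet : (1 + vecMulVec v e).det = 1 := by
    rw [vecMulVec_eq Unit, det_one_add_replicateCol_mul_replicateRow, single_one_dotProduct, hv₀,
      add_zero]
  obtain ⟨g, hg, hgdet, hgζ⟩ := exists_mem_Kr_det_eq_one_glAct_eq_mulVec hM hdet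
  refine ⟨g, hg, hgdet, ?_⟩
  rw [hgζ, add_mulVec, one_mulVec, vecMulVec_mulVec, single_one_dotProduct, op_smul_eq_smul,
    smul_inv_smul₀ hζ, add_sub_cancel]

theorem exists_mem_Kr_det_eq_one_glAct_eq (hn : 2 ≤ n) (hr : 1 ≤ r) {ξ ξ' : Fin n → ℚ_[p]}
    (hξ : ξ ≠ 0) (hd : ‖ξ' - ξ‖ ≤ (p : ℝ) ^ (-(r : ℤ)) * ‖ξ‖) :
    ∃ g ∈ Kr p n r, (g : Matrix (Fin n) (Fin n) ℤ_[p]).det = 1 ∧ glAct p n g ξ = ξ' := by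
  have : Nonempty (Fin n) := ⟨⟨0, by omega⟩⟩
  obtain ⟨i₀, hi₀ : ‖ξ i₀‖ = ‖ξ‖⟩ := (IsGreatest.pi_norm ξ).1
  obtain ⟨i₁, hi₁⟩ := Fintype.exists_ne_of_one_lt_card (by simp; omega) i₀
  have hξ₀ : ξ i₀ ≠ 0 := by
    rw [← norm_pos_iff, hi₀]
    exact norm_pos_iff.2 hξ
  have hd₀ : ‖ξ' i₀ - ξ i₀‖ ≤ (p : ℝ) ^ (-(r : ℤ)) * ‖ξ i₀‖ := by
    rw [hi₀]
    exact (norm_le_pi_norm (ξ' - ξ) i₀).trans hd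
  obtain ⟨g₁, hg₁, hdet₁, hg₁ξ⟩ := exists_mem_Kr_det_eq_one_glAct_apply_eq hr hi₁ hξ₀ hd₀
  set ζ := glAct p n g₁ ξ
  have hζ_norm : ‖ζ i₀‖ = ‖ξ‖ := by
    rw [hg₁ξ, Padic.norm_eq_of_norm_sub_lt_right, hi₀]
    exact hd₀.trans_lt (mul_lt_of_lt_one_left (norm_pos_iff.2 hξ₀) (prime_zpow_neg_lt_one hr))
  have hζd : ‖ξ' - ζ‖ ≤ (p : ℝ) ^ (-(r : ℤ)) * ‖ζ i₀‖ := by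
    rw [hζ_norm, ← sub_add_sub_cancel ξ' ξ ζ]
    exact (IsUltrametricDist.norm_add_le_max _ _).trans
      (max_le hd (by rw [norm_sub_rev]; exact norm_glAct_sub_le hg₁ ξ))
  have hζ₀ : ζ i₀ ≠ 0 := by
    rw [← norm_pos_iff, hζ_norm]
    exact norm_pos_iff.2 hξ
  obtain ⟨g₂, hg₂, hdet₂, hg₂ζ⟩ := exists_mem_Kr_det_eq_one_glAct_eq_of_apply_eq hζ₀ hg₁ξ.symm hζd
  refine ⟨g₂ * g₁, mul_mem_Kr hg₂ hg₁, ?_, by rw [glAct_mul, hg₂ζ]⟩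
  rw [Units.val_mul, det_mul, hdet₂, hdet₁, one_mul]

end Padic

theorem stmt_3 (p : ℕ) [Fact p.Prime] (n : ℕ) (hn : 2 ≤ n) (r : ℕ) (hr : 1 ≤ r)
    (φ : (Fin n → ℚ_[p]) → ℂ) :
    -- (i) ↔ (ii)
    ((∀ g ∈ Kr p n r, Matrix.det (g : Matrix (Fin n) (Fin n) ℤ_[p]) = 1 →
        ∀ ξ : Fin n → ℚ_[p], ξ ≠ 0 → φ (glAct p n g ξ) = φ ξ) ↔
      (∀ ξ ξ' : Fin n → ℚ_[p], ξ ≠ 0 → ξ' ≠ 0 →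
        ‖ξ' - ξ‖ ≤ (p : ℝ) ^ (-(r : ℤ)) * ‖ξ‖ → φ ξ' = φ ξ)) ∧
    -- (ii) ↔ (iii)
    ((∀ ξ ξ' : Fin n → ℚ_[p], ξ ≠ 0 → ξ' ≠ 0 →
        ‖ξ' - ξ‖ ≤ (p : ℝ) ^ (-(r : ℤ)) * ‖ξ‖ → φ ξ' = φ ξ) ↔
      (∀ g ∈ Kr p n r, ∀ ξ : Fin n → ℚ_[p], ξ ≠ 0 → φ (glAct p n g ξ) = φ ξ)) := by
  refine ⟨⟨fun h ξ ξ' hξ _ hd => ?_, fun h g hg _ ξ hξ => ?_⟩,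
    ⟨fun h g hg ξ hξ => ?_, fun h ξ ξ' hξ _ hd => ?_⟩⟩
  · obtain ⟨g, hg, hdet, rfl⟩ := exists_mem_Kr_det_eq_one_glAct_eq hn hr hξ hd
    exact h g hg hdet ξ hξ
  · exact h ξ _ hξ (glAct_ne_zero hr hg hξ) (norm_glAct_sub_le hg ξ)
  · exact h ξ _ hξ (glAct_ne_zero hr hg hξ) (norm_glAct_sub_le hg ξ)
  · obtain ⟨g, hg, -, rfl⟩ := exists_mem_Kr_det_eq_one_glAct_eq hn hr hξ hd
    exact h g hg ξ hξ
end
end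

section
/- Let φ ∈ C₋ and x ∈ ℚ_p^n \ {0}. Then there exists a compact open subgroup Λ₀ of (ℚ_p^n, +) such that for every compact open subgroup Λ of (ℚ_p^n, +) with Λ ⊇ Λ₀, one has ∫_Λ ψ(ξ·x) φ(ξ) dμ(ξ) = ∫_{Λ₀} ψ(ξ·x) φ(ξ) dμ(ξ) (all these integrals converge absolutely). -/
open MeasureTheory
open scoped MatrixGroups

noncomputable section

/-- `φ` is `K`-finite for `K = GL_n(ℤ_p)`. -/
def KFinite (p : ℕ) [Fact p.Prime] (n : ℕ) (φ : (Fin n → ℚ_[p]) → ℂ) : Prop :=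
  FiniteDimensional ℂ
    (Submodule.span ℂ
      (Set.range fun g : GL (Fin n) ℤ_[p] =>
        fun ξ : Fin n → ℚ_[p] => φ (glAct p n g⁻¹ ξ)))

/-- `φ` is locally constant on `ℚ_p^n \ {0}`. -/
def LocConstOff0 (p : ℕ) [Fact p.Prime] (n : ℕ) (φ : (Fin n → ℚ_[p]) → ℂ) : Prop :=
  ∀ ξ : Fin n → ℚ_[p], ξ ≠ 0 → ∃ U ∈ nhds ξ, ∀ η ∈ U, φ η = φ ξ

/-- The space `C`, encoded as functions on `ℚ_p^n` vanishing at `0`. -/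
def Cspace (p : ℕ) [Fact p.Prime] (n : ℕ) : Set ((Fin n → ℚ_[p]) → ℂ) :=
  {φ | φ 0 = 0 ∧ LocConstOff0 p n φ ∧ KFinite p n φ}

/-- `C₋`: members of `C` supported away from `0`. -/
def Cminus (p : ℕ) [Fact p.Prime] (n : ℕ) : Set ((Fin n → ℚ_[p]) → ℂ) :=
  {φ ∈ Cspace p n | ∃ ε > (0 : ℝ), ∀ ξ : Fin n → ℚ_[p], ‖ξ‖ < ε → φ ξ = 0}

/-- `ψ` is an additive character of `ℚ_p`, trivial on `ℤ_p` but not on `p⁻¹ℤ_p`. -/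
def IsStdAddChar (p : ℕ) [Fact p.Prime] (ψ : ℚ_[p] → ℂ) : Prop :=
  (∀ a b : ℚ_[p], ψ (a + b) = ψ a * ψ b) ∧
  (∀ a : ℚ_[p], ‖ψ a‖ = 1) ∧
  (∀ z : ℚ_[p], ‖z‖ ≤ 1 → ψ z = 1) ∧
  (∃ y : ℚ_[p], ‖y‖ = (p : ℝ) ∧ ψ y ≠ 1)


/-! `K`-finiteness makes `φ` invariant under a congruence neighbourhood `{g : ‖g - 1‖ ≤ ε}` of
`GL_n(ℤ_p)`: the translates `φ ∘ g` span a finite-dimensional space, on which finitely many point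
evaluations are injective, and `φ` is locally constant at those finitely many points.
A rank-one perturbation `1 + a e_{j₀}ᵀ` of the identity moves `ξ` to any `ξ + η` with
`‖η‖ ≤ ε ‖ξ‖`, so `φ (ξ + η) = φ ξ` for such `η`.

Pick `η₀` with `ψ (η₀ · x) ≠ 1` and let `Λ₀` be a ball containing `η₀` of radius at least
`‖η₀‖ / ε`. On `Λ \ Λ₀` translation by `η₀` preserves `μ` and multiplies the integrand by
`ψ (η₀ · x) ≠ 1`, so the integral over `Λ \ Λ₀` vanishes. -/

theorem Submodule.exists_finset_eq_of_eqOn {K X : Type*} [Field K] (W : Submodule K (X → K))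
    [FiniteDimensional K W] :
    ∃ P : Finset X, ∀ f ∈ W, ∀ g ∈ W, Set.EqOn f g P → f = g := by
  classical
  let Z : Finset X → Submodule K W := fun P =>
    ⨅ x ∈ P, LinearMap.ker ((LinearMap.proj x).comp W.subtype)
  have mem_Z {P : Finset X} {f : W} : f ∈ Z P ↔ ∀ x ∈ P, (f : X → K) x = 0 := by
    simp [Z]
  obtain ⟨_, ⟨P, rfl⟩, hmin⟩ := IsArtinian.set_has_minimal (Set.range Z) ⟨_, ⟨∅, rfl⟩⟩
  have hZ : Z P = ⊥ := by
    by_contra hne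
    obtain ⟨f, hfP, hf0⟩ := Submodule.exists_mem_ne_zero_of_ne_bot hne
    obtain ⟨x, hx⟩ : ∃ x, (f : X → K) x ≠ 0 := by
      by_contra! h
      exact hf0 (Subtype.ext (funext h))
    refine hmin (Z (insert x P)) ⟨_, rfl⟩ (lt_of_le_of_ne ?_ fun h => hx ?_)
    · exact fun g hg => mem_Z.2 fun y hy => mem_Z.1 hg y (Finset.mem_insert_of_mem hy)
    · exact mem_Z.1 (h ▸ hfP) x (Finset.mem_insert_self x P)
  refine ⟨P, fun f hf g hg hfg => sub_eq_zero.1 ?_⟩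
  have hfg' : (⟨f - g, sub_mem hf hg⟩ : W) ∈ Z P := mem_Z.2 fun x hx => sub_eq_zero.2 (hfg hx)
  rw [hZ, Submodule.mem_bot] at hfg'
  exact congrArg Subtype.val hfg'

theorem IsLocallyConstant.exists_forall_finset_add_eq {E Y : Type*} [SeminormedAddCommGroup E]
    {φ : E → Y} (hφ : IsLocallyConstant φ) (P : Finset E) :
    ∃ δ > 0, ∀ v : E, ‖v‖ < δ → ∀ ζ ∈ P, φ (ζ + v) = φ ζ := by
  have hev : ∀ᶠ v in nhds (0 : E), ∀ ζ ∈ P, φ (ζ + v) = φ ζ := by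
    refine (Filter.eventually_all_finset P).2 fun ζ _ => ?_
    have hζ : Filter.Tendsto (ζ + ·) (nhds 0) (nhds ζ) := by
      simpa using (continuous_const_add ζ).tendsto 0
    exact hζ.eventually ((IsLocallyConstant.iff_eventually_eq φ).1 hφ ζ)
  simpa using Metric.eventually_nhds_iff.1 hev

theorem exists_sum_mul_eq {K ι : Type*} [Field K] [Fintype ι] {x : ι → K} (hx : x ≠ 0) (y : K) :
    ∃ η : ι → K, ∑ i, η i * x i = y := by
  classical
  obtain ⟨i₀, hi₀⟩ := Function.ne_iff.1 hx
  exact ⟨Pi.single i₀ (y / x i₀), by simp [Pi.single_apply, div_mul_cancel₀ _ hi₀]⟩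

theorem setIntegral_eq_zero_of_add_right_eq_mul {G : Type*} [MeasurableSpace G] [AddGroup G]
    [MeasurableAdd G] {μ : Measure G} [μ.IsAddRightInvariant] {S : Set G} (hS : MeasurableSet S)
    {η : G} (hSη : (· + η) ⁻¹' S = S) {f : G → ℂ} {c : ℂ} (hc : c ≠ 1)
    (hf : ∀ ξ ∈ S, f (ξ + η) = c * f ξ) :
    ∫ ξ in S, f ξ ∂μ = 0 := by
  have h : ∫ ξ in S, f ξ ∂μ = c * ∫ ξ in S, f ξ ∂μ := calc
    ∫ ξ in S, f ξ ∂μ = ∫ ξ in S, f (ξ + η) ∂μ := by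
      conv_rhs => rw [← hSη]
      exact ((measurePreserving_add_right μ η).setIntegral_preimage_emb
        (measurableEmbedding_addRight η) f S).symm
    _ = ∫ ξ in S, c * f ξ ∂μ := setIntegral_congr_fun hS hf
    _ = c * ∫ ξ in S, f ξ ∂μ := integral_const_mul c _
  have h' : (1 - c) * ∫ ξ in S, f ξ ∂μ = 0 := by linear_combination h
  exact (mul_eq_zero.1 h').resolve_left (sub_ne_zero.2 hc.symm)

theorem AddSubgroup.setIntegral_eq_of_le {G : Type*} [MeasurableSpace G] [AddGroup G]
    [MeasurableAdd G] {μ : Measure G} [μ.IsAddRightInvariant] {H K : AddSubgroup G} (hHK : H ≤ K)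
    (hH : MeasurableSet (H : Set G)) (hK : MeasurableSet (K : Set G)) {f : G → ℂ}
    (hf : IntegrableOn f K μ) {η : G} (hη : η ∈ H) {c : ℂ} (hc : c ≠ 1)
    (hfη : ∀ ξ ∈ K, ξ ∉ H → f (ξ + η) = c * f ξ) :
    ∫ ξ in K, f ξ ∂μ = ∫ ξ in H, f ξ ∂μ := by
  have hS : MeasurableSet ((K : Set G) \ H) := hK.diff hH
  have hSη : (· + η) ⁻¹' ((K : Set G) \ H) = (K : Set G) \ H := by
    ext ξ
    simp [AddSubgroup.add_mem_cancel_right _ hη, AddSubgroup.add_mem_cancel_right _ (hHK hη)]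
  rw [← Set.union_sdiff_cancel (SetLike.coe_subset_coe.2 hHK),
    setIntegral_union Set.disjoint_sdiff_right hS (hf.mono_set (SetLike.coe_subset_coe.2 hHK))
      (hf.mono_set Set.sdiff_subset),
    setIntegral_eq_zero_of_add_right_eq_mul hS hSη hc fun ξ hξ => hfη ξ hξ.1 hξ.2, add_zero]

theorem PadicInt.isUnit_det_one_add_vecMulVec_single {p : ℕ} [Fact p.Prime] {ι : Type*}
    [Fintype ι] [DecidableEq ι] {a : ι → ℤ_[p]} {j₀ : ι} (ha : ‖a j₀‖ < 1) :
    IsUnit (1 + Matrix.vecMulVec a (Pi.single j₀ 1)).det := by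
  rw [← norm_one (α := ℤ_[p])] at ha
  rw [Matrix.vecMulVec_eq Unit, Matrix.det_one_add_replicateCol_mul_replicateRow,
    single_dotProduct, one_mul, PadicInt.isUnit_iff,
    IsUltrametricDist.norm_add_eq_max_of_norm_ne_norm ha.ne', max_eq_left ha.le, norm_one]

section glAct

variable {p : ℕ} [Fact p.Prime] {n : ℕ}

theorem glAct_sub_self_apply (g : GL (Fin n) ℤ_[p]) (ζ : Fin n → ℚ_[p]) (i : Fin n) :
    (glAct p n g ζ - ζ) i =
      ∑ j, ((((g : Matrix (Fin n) (Fin n) ℤ_[p]) - 1) i j : ℤ_[p]) : ℚ_[p]) * ζ j := by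
  simp only [Matrix.sub_apply, PadicInt.coe_sub, sub_mul, Finset.sum_sub_distrib]
  simp [glAct, Matrix.mulVec, dotProduct, Matrix.one_apply,
    apply_ite (fun z : ℤ_[p] => (z : ℚ_[p]))]

theorem glAct_one : glAct p n 1 = id := by
  funext ζ i
  simpa [sub_eq_zero] using glAct_sub_self_apply 1 ζ i

theorem norm_glAct_sub_self_le {ε : ℝ} (hε : 0 ≤ ε) {g : GL (Fin n) ℤ_[p]}
    (hg : ∀ i j, ‖((g : Matrix (Fin n) (Fin n) ℤ_[p]) - 1) i j‖ ≤ ε) (ζ : Fin n → ℚ_[p]) :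
    ‖glAct p n g ζ - ζ‖ ≤ ε * ‖ζ‖ := by
  refine (pi_norm_le_iff_of_nonneg (by positivity)).2 fun i => ?_
  rw [glAct_sub_self_apply]
  refine IsUltrametricDist.norm_sum_le_of_forall_le_of_nonneg (by positivity) fun j _ => ?_
  rw [norm_mul, ← PadicInt.norm_def]
  exact mul_le_mul (hg i j) (norm_le_pi_norm ζ j) (norm_nonneg _) hε

theorem exists_glAct_eq_add {ξ η : Fin n → ℚ_[p]} (hξ : ξ ≠ 0) {r : ℝ} (hr : r < 1)
    (h : ‖η‖ ≤ r * ‖ξ‖) :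
    ∃ g : GL (Fin n) ℤ_[p], (∀ i j, ‖((g : Matrix (Fin n) (Fin n) ℤ_[p]) - 1) i j‖ ≤ r) ∧
      glAct p n g ξ = ξ + η := by
  classical
  obtain ⟨i₁, -⟩ := Function.ne_iff.1 hξ
  obtain ⟨j₀, -, hj₀⟩ := Finset.univ.exists_max_image (fun i => ‖ξ i‖) ⟨i₁, Finset.mem_univ _⟩
  have hξj₀ : ‖ξ‖ ≤ ‖ξ j₀‖ :=
    (pi_norm_le_iff_of_nonneg (norm_nonneg _)).2 fun i => hj₀ i (Finset.mem_univ i)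
  have hξj₀_pos : 0 < ‖ξ j₀‖ := (norm_pos_iff.2 hξ).trans_le hξj₀
  have hr₀ : 0 ≤ r := nonneg_of_mul_nonneg_left ((norm_nonneg η).trans h) (norm_pos_iff.2 hξ)
  have ha : ∀ i, ‖η i / ξ j₀‖ ≤ r := fun i => by
    rw [norm_div, div_le_iff₀ hξj₀_pos]
    exact (norm_le_pi_norm η i).trans (h.trans (mul_le_mul_of_nonneg_left hξj₀ hr₀))
  -- `g = 1 + a e_{j₀}ᵀ` with `a = η / ξ j₀`; `ξ j₀` has maximal norm, so `a` is integral and small.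
  let a : Fin n → ℤ_[p] := fun i => ⟨η i / ξ j₀, (ha i).trans hr.le⟩
  let e : Fin n → ℤ_[p] := Pi.single j₀ 1
  let M : Matrix (Fin n) (Fin n) ℤ_[p] := 1 + Matrix.vecMulVec a e
  have hM : ∀ i j, ((M i j : ℤ_[p]) : ℚ_[p]) =
      (1 : Matrix (Fin n) (Fin n) ℚ_[p]) i j +
        η i / ξ j₀ * Pi.single (M := fun _ => ℚ_[p]) j₀ 1 j := by
    intro i j
    simp only [M, Matrix.add_apply, Matrix.vecMulVec_apply, PadicInt.coe_add, PadicInt.coe_mul]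
    congr 1
    · by_cases hij : i = j <;> simp [Matrix.one_apply, hij]
    · by_cases hj : j = j₀ <;> simp [e, a, hj]
  refine ⟨Matrix.nonsingInvUnit M
    (PadicInt.isUnit_det_one_add_vecMulVec_single ((ha j₀).trans_lt hr)), fun i j => ?_, ?_⟩
  · change ‖(M - 1) i j‖ ≤ r
    rw [add_sub_cancel_left, Matrix.vecMulVec_apply, norm_mul]
    exact (mul_le_of_le_one_right (norm_nonneg _) (PadicInt.norm_le_one _)).trans (ha i)
  · ext i
    change ∑ j, ((M i j : ℤ_[p]) : ℚ_[p]) * ξ j = ξ i + η i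
    simp [hM, add_mul, Finset.sum_add_distrib, Matrix.one_apply, Pi.single_apply,
      div_mul_cancel₀ _ (norm_pos_iff.1 hξj₀_pos)]

end glAct

theorem KFinite.exists_comp_glAct_eq {p : ℕ} [Fact p.Prime] {n : ℕ} {φ : (Fin n → ℚ_[p]) → ℂ}
    (hφ : KFinite p n φ) (hlc : IsLocallyConstant φ) :
    ∃ ε > 0, ∀ g : GL (Fin n) ℤ_[p],
      (∀ i j, ‖((g : Matrix (Fin n) (Fin n) ℤ_[p]) - 1) i j‖ ≤ ε) → φ ∘ glAct p n g = φ := by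
  set V := Submodule.span ℂ (Set.range fun g : GL (Fin n) ℤ_[p] => φ ∘ glAct p n g⁻¹)
  have : FiniteDimensional ℂ V := hφ
  have mem_V (g : GL (Fin n) ℤ_[p]) : φ ∘ glAct p n g ∈ V :=
    Submodule.subset_span ⟨g⁻¹, by simp only [inv_inv]⟩
  obtain ⟨P, hP⟩ := V.exists_finset_eq_of_eqOn
  obtain ⟨δ, hδ, hφδ⟩ := hlc.exists_forall_finset_add_eq P
  set R : ℝ := ↑(P.sup (‖·‖₊))
  refine ⟨δ / (R + 1), by positivity, fun g hg => ?_⟩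
  have hφ₁ : φ ∘ glAct p n 1 = φ := by rw [glAct_one, Function.comp_id]
  refine hP _ (mem_V g) _ (hφ₁ ▸ mem_V 1) fun ζ hζ => ?_
  have hζR : ‖ζ‖ ≤ R := NNReal.coe_le_coe.2 (Finset.le_sup (f := (‖·‖₊)) hζ)
  have hclose : ‖glAct p n g ζ - ζ‖ < δ := calc
    ‖glAct p n g ζ - ζ‖ ≤ δ / (R + 1) * ‖ζ‖ := norm_glAct_sub_self_le (by positivity) hg ζ
    _ ≤ δ / (R + 1) * R := by gcongr
    _ < δ := by
      rw [div_mul_eq_mul_div, div_lt_iff₀ (by positivity)]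
      exact mul_lt_mul_of_pos_left (lt_add_one R) hδ
  simpa using hφδ _ hclose ζ hζ

theorem KFinite.exists_forall_add_eq {p : ℕ} [Fact p.Prime] {n : ℕ} {φ : (Fin n → ℚ_[p]) → ℂ}
    (hφ : KFinite p n φ) (hlc : IsLocallyConstant φ) :
    ∃ ε > 0, ε < 1 ∧ ∀ ξ η : Fin n → ℚ_[p], ‖η‖ ≤ ε * ‖ξ‖ → φ (ξ + η) = φ ξ := by
  obtain ⟨ε, hε, hφε⟩ := hφ.exists_comp_glAct_eq hlc
  have hlt : min ε (1 / 2) < 1 := (min_le_right _ _).trans_lt (by norm_num)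
  refine ⟨min ε (1 / 2), by positivity, hlt, fun ξ η h => ?_⟩
  rcases eq_or_ne ξ 0 with rfl | hξ
  · rw [norm_zero, mul_zero, norm_le_zero_iff] at h
    rw [h, add_zero]
  obtain ⟨g, hg, hgξ⟩ := exists_glAct_eq_add hξ hlt h
  rw [← hgξ]
  exact congrFun (hφε g fun i j => (hg i j).trans (min_le_left _ _)) ξ

theorem Cminus.isLocallyConstant {p : ℕ} [Fact p.Prime] {n : ℕ} {φ : (Fin n → ℚ_[p]) → ℂ}
    (hφ : φ ∈ Cminus p n) : IsLocallyConstant φ := by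
  obtain ⟨⟨hφ0, hlc, -⟩, ε, hε, hsupp⟩ := hφ
  refine (IsLocallyConstant.iff_eventually_eq φ).2 fun ξ => ?_
  rcases eq_or_ne ξ 0 with rfl | hξ
  · rw [hφ0]
    exact Metric.eventually_nhds_iff.2 ⟨ε, hε, fun {η} hη => hsupp η (by simpa using hη)⟩
  · obtain ⟨U, hU, hφU⟩ := hlc ξ hξ
    exact Filter.eventually_of_mem hU hφU

theorem IsStdAddChar.isLocallyConstant {p : ℕ} [Fact p.Prime] {ψ : ℚ_[p] → ℂ}
    (hψ : IsStdAddChar p ψ) : IsLocallyConstant ψ := by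
  obtain ⟨hadd, -, htriv, -⟩ := hψ
  refine (IsLocallyConstant.iff_eventually_eq ψ).2 fun a => ?_
  refine Metric.eventually_nhds_iff.2 ⟨1, one_pos, fun {b} hb => ?_⟩
  calc ψ b = ψ (a + (b - a)) := by rw [add_sub_cancel]
    _ = ψ a := by rw [hadd, htriv (b - a) (by rw [← dist_eq_norm]; exact hb.le), mul_one]

theorem stmt_4_general (p : ℕ) [Fact p.Prime] (n : ℕ)
    [MeasurableSpace ℚ_[p]] [BorelSpace ℚ_[p]]
    (μ : Measure (Fin n → ℚ_[p])) [μ.IsAddHaarMeasure]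
    (ψ : ℚ_[p] → ℂ) (hψ : IsStdAddChar p ψ)
    (φ : (Fin n → ℚ_[p]) → ℂ) (hφ : φ ∈ Cminus p n)
    (x : Fin n → ℚ_[p]) (hx : x ≠ 0) :
    ∃ Λ₀ : AddSubgroup (Fin n → ℚ_[p]),
      IsCompact (Λ₀ : Set (Fin n → ℚ_[p])) ∧ IsOpen (Λ₀ : Set (Fin n → ℚ_[p])) ∧
      IntegrableOn (fun ξ : Fin n → ℚ_[p] => ψ (∑ i, ξ i * x i) * φ ξ)
        (Λ₀ : Set (Fin n → ℚ_[p])) μ ∧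
      ∀ Λ : AddSubgroup (Fin n → ℚ_[p]),
        IsCompact (Λ : Set (Fin n → ℚ_[p])) → IsOpen (Λ : Set (Fin n → ℚ_[p])) → Λ₀ ≤ Λ →
          IntegrableOn (fun ξ : Fin n → ℚ_[p] => ψ (∑ i, ξ i * x i) * φ ξ)
            (Λ : Set (Fin n → ℚ_[p])) μ ∧
          ∫ ξ in (Λ : Set (Fin n → ℚ_[p])), ψ (∑ i, ξ i * x i) * φ ξ ∂μ =
            ∫ ξ in (Λ₀ : Set (Fin n → ℚ_[p])), ψ (∑ i, ξ i * x i) * φ ξ ∂μ := by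
  have hφ_lc := Cminus.isLocallyConstant hφ
  obtain ⟨ε, hε, hε1, hφ_add⟩ := hφ.1.2.2.exists_forall_add_eq hφ_lc
  obtain ⟨y, -, hy⟩ := hψ.2.2.2
  obtain ⟨η₀, hη₀x⟩ := exists_sum_mul_eq hx y
  have hf : Continuous fun ξ : Fin n → ℚ_[p] => ψ (∑ i, ξ i * x i) * φ ξ :=
    (hψ.isLocallyConstant.continuous.comp (by fun_prop)).mul hφ_lc.continuous
  set r := (‖η₀‖ + 1) / ε
  have hr : 0 < r := by positivity
  set Λ₀ := IsUltrametricDist.closedBall_openAddSubgroup (Fin n → ℚ_[p]) hr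
  have hΛ₀ : (Λ₀ : Set (Fin n → ℚ_[p])) = Metric.closedBall 0 r := rfl
  have hη₀Λ₀ : η₀ ∈ Λ₀ := by
    rw [← SetLike.mem_coe, hΛ₀, mem_closedBall_zero_iff]
    exact (le_add_of_nonneg_right zero_le_one).trans (le_div_self (by positivity) hε hε1.le)
  refine ⟨Λ₀, hΛ₀ ▸ isCompact_closedBall _ _, Λ₀.isOpen,
    hf.continuousOn.integrableOn_compact (hΛ₀ ▸ isCompact_closedBall _ _),
    fun Λ hΛc hΛo hle => ⟨hf.continuousOn.integrableOn_compact hΛc, ?_⟩⟩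
  refine AddSubgroup.setIntegral_eq_of_le hle (hΛ₀ ▸ measurableSet_closedBall)
    hΛo.measurableSet (hf.continuousOn.integrableOn_compact hΛc) hη₀Λ₀ hy fun ξ _ hξ => ?_
  have hξr : r < ‖ξ‖ := by simpa [← SetLike.mem_coe, hΛ₀] using hξ
  have hφξ : φ (ξ + η₀) = φ ξ := hφ_add ξ η₀ <| calc
    ‖η₀‖ ≤ ε * r := by rw [mul_div_cancel₀ _ hε.ne']; linarith
    _ ≤ ε * ‖ξ‖ := by gcongr
  simp only [Pi.add_apply, add_mul, Finset.sum_add_distrib, hη₀x, hψ.1, hφξ]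
  ring

theorem stmt_4 (p : ℕ) [Fact p.Prime] (n : ℕ) (hn : 2 ≤ n)
    [MeasurableSpace ℚ_[p]] [BorelSpace ℚ_[p]]
    (μ : Measure (Fin n → ℚ_[p])) [μ.IsAddHaarMeasure]
    (hμ : μ (Metric.closedBall 0 1) = 1)
    (ψ : ℚ_[p] → ℂ) (hψ : IsStdAddChar p ψ)
    (φ : (Fin n → ℚ_[p]) → ℂ) (hφ : φ ∈ Cminus p n)
    (x : Fin n → ℚ_[p]) (hx : x ≠ 0) :
    ∃ Λ₀ : AddSubgroup (Fin n → ℚ_[p]),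
      IsCompact (Λ₀ : Set (Fin n → ℚ_[p])) ∧ IsOpen (Λ₀ : Set (Fin n → ℚ_[p])) ∧
      IntegrableOn (fun ξ : Fin n → ℚ_[p] => ψ (∑ i, ξ i * x i) * φ ξ)
        (Λ₀ : Set (Fin n → ℚ_[p])) μ ∧
      ∀ Λ : AddSubgroup (Fin n → ℚ_[p]),
        IsCompact (Λ : Set (Fin n → ℚ_[p])) → IsOpen (Λ : Set (Fin n → ℚ_[p])) → Λ₀ ≤ Λ →
          IntegrableOn (fun ξ : Fin n → ℚ_[p] => ψ (∑ i, ξ i * x i) * φ ξ)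
            (Λ : Set (Fin n → ℚ_[p])) μ ∧
          ∫ ξ in (Λ : Set (Fin n → ℚ_[p])), ψ (∑ i, ξ i * x i) * φ ξ ∂μ =
            ∫ ξ in (Λ₀ : Set (Fin n → ℚ_[p])), ψ (∑ i, ξ i * x i) * φ ξ ∂μ :=
  stmt_4_general p n μ ψ hψ φ hφ x hx
end
end

section
/- Let f ∈ C₊. For ξ ∈ ℚ_p^n \ {0} set F'f(ξ) = ∫_{ℚ_p^n} f(y)·(ψ(−(ξ·y)) − 1) dμ(y); this integral converges absolutely. Then for every x ∈ ℚ_p^n \ {0} there exists a compact open subgroup Λ₀ of (ℚ_p^n, +) such that for every compact open subgroup Λ ⊇ Λ₀ one has ∫_Λ F'f(ξ)·ψ(ξ·x) dμ(ξ) = f(x). -/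
open MeasureTheory
open scoped MatrixGroups

noncomputable section

/-- `C₊`: members of `C` with bounded support. -/
def Cplus (p : ℕ) [Fact p.Prime] (n : ℕ) : Set ((Fin n → ℚ_[p]) → ℂ) :=
  {φ ∈ Cspace p n | ∃ R > (0 : ℝ), ∀ ξ : Fin n → ℚ_[p], R < ‖ξ‖ → φ ξ = 0}

namespace S5

variable {p : ℕ} [Fact p.Prime] {n : ℕ}

lemma p_pos : (0:ℝ) < (p:ℝ) := by exact_mod_cast (Fact.out : p.Prime).pos
lemma p_one_lt : (1:ℝ) < (p:ℝ) := by exact_mod_cast (Fact.out : p.Prime).one_lt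

def dotP (ξ z : Fin n → ℚ_[p]) : ℚ_[p] := ∑ i, ξ i * z i

lemma dotP_comm (ξ z : Fin n → ℚ_[p]) : dotP ξ z = dotP z ξ := by
  simp [dotP, mul_comm]

lemma dotP_add_left (ξ η z : Fin n → ℚ_[p]) : dotP (ξ + η) z = dotP ξ z + dotP η z := by
  simp [dotP, add_mul, Finset.sum_add_distrib]

lemma dotP_sub_right (ξ x y : Fin n → ℚ_[p]) : dotP ξ (x - y) = dotP ξ x - dotP ξ y := by
  simp [dotP, mul_sub, Finset.sum_sub_distrib]

lemma norm_dotP_le (ξ z : Fin n → ℚ_[p]) : ‖dotP ξ z‖ ≤ ‖ξ‖ * ‖z‖ := by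
  refine IsUltrametricDist.norm_sum_le_of_forall_le_of_nonneg
    (mul_nonneg (norm_nonneg _) (norm_nonneg _)) (fun i _ => ?_)
  rw [norm_mul]
  exact mul_le_mul (norm_le_pi_norm ξ i) (norm_le_pi_norm z i) (norm_nonneg _) (norm_nonneg _)

lemma pi_norm_add_le_max (a b : Fin n → ℚ_[p]) : ‖a + b‖ ≤ max ‖a‖ ‖b‖ := by
  rw [pi_norm_le_iff_of_nonneg (le_max_iff.mpr (Or.inl (norm_nonneg a)))]
  intro i
  exact (Padic.nonarchimedean _ _).trans
    (max_le_max (norm_le_pi_norm a i) (norm_le_pi_norm b i))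

lemma exists_norm_coord (hn : n ≠ 0) (z : Fin n → ℚ_[p]) : ∃ i, ‖z i‖ = ‖z‖ := by
  haveI : Nonempty (Fin n) := ⟨⟨0, Nat.pos_of_ne_zero hn⟩⟩
  obtain ⟨i, -, h⟩ := Finset.exists_mem_eq_sup Finset.univ Finset.univ_nonempty
    (fun i => ‖z i‖₊)
  exact ⟨i, by rw [Pi.norm_def, h]; rfl⟩

variable (p n) in
def Bgp (m : ℤ) : AddSubgroup (Fin n → ℚ_[p]) where
  carrier := Metric.closedBall 0 ((p : ℝ) ^ m)
  zero_mem' := by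
    simp only [Metric.mem_closedBall, dist_self]
    exact le_of_lt (zpow_pos p_pos m)
  add_mem' := by
    intro a b ha hb
    rw [Metric.mem_closedBall, dist_zero_right] at *
    exact (pi_norm_add_le_max a b).trans (max_le ha hb)
  neg_mem' := by
    intro a ha
    rwa [Metric.mem_closedBall, dist_zero_right, norm_neg, ← dist_zero_right,
      ← Metric.mem_closedBall]

lemma mem_Bgp_iff {m : ℤ} {ξ : Fin n → ℚ_[p]} : ξ ∈ Bgp p n m ↔ ‖ξ‖ ≤ (p : ℝ) ^ m := by
  show ξ ∈ Metric.closedBall 0 ((p:ℝ)^m) ↔ _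
  rw [Metric.mem_closedBall, dist_zero_right]

lemma Bgp_coe (m : ℤ) : (Bgp p n m : Set (Fin n → ℚ_[p])) = Metric.closedBall 0 ((p : ℝ) ^ m) := rfl

lemma Bgp_isCompact (m : ℤ) : IsCompact (Bgp p n m : Set (Fin n → ℚ_[p])) := by
  rw [Bgp_coe]; exact isCompact_closedBall _ _

lemma Bgp_isOpen (m : ℤ) : IsOpen (Bgp p n m : Set (Fin n → ℚ_[p])) := by
  rw [Bgp_coe, Metric.isOpen_iff]
  intro a ha
  refine ⟨(p : ℝ) ^ m, zpow_pos p_pos m, fun b hb => ?_⟩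
  rw [Metric.mem_closedBall, dist_zero_right] at *
  rw [Metric.mem_ball, dist_eq_norm] at hb
  calc ‖b‖ = ‖a + (b - a)‖ := by ring_nf
    _ ≤ max ‖a‖ ‖b - a‖ := pi_norm_add_le_max _ _
    _ ≤ _ := max_le ha hb.le

variable {ψ : ℚ_[p] → ℂ}

lemma psi_zero (hψ : IsStdAddChar p ψ) : ψ 0 = 1 := hψ.2.2.1 0 (by simp)

lemma psi_cont (hψ : IsStdAddChar p ψ) : Continuous ψ := by
  rw [continuous_iff_continuousAt]
  intro a
  apply Filter.EventuallyEq.continuousAt (y := ψ a)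
  filter_upwards [Metric.closedBall_mem_nhds a one_pos] with b hb
  rw [Metric.mem_closedBall, dist_eq_norm] at hb
  have h1 := hψ.1 a (b - a)
  rw [hψ.2.2.1 _ hb, mul_one, add_sub_cancel] at h1
  exact h1

lemma psi_sub (hψ : IsStdAddChar p ψ) (a b : ℚ_[p]) : ψ (a - b) = ψ (-b) * ψ a := by
  rw [sub_eq_neg_add, hψ.1]

lemma psi_norm (hψ : IsStdAddChar p ψ) (a : ℚ_[p]) : ‖ψ a‖ = 1 := by
  rw [hψ.2.1]

lemma dotP_cont (ξ : Fin n → ℚ_[p]) : Continuous fun z : Fin n → ℚ_[p] => dotP ξ z := by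
  unfold dotP
  exact continuous_finset_sum _ fun i _ => continuous_const.mul (continuous_apply i)

lemma mem_dual_ball (hn : n ≠ 0) (hψ : IsStdAddChar p ψ) (m : ℤ) (z : Fin n → ℚ_[p]) :
    (∀ ξ : Fin n → ℚ_[p], ‖ξ‖ ≤ (p : ℝ) ^ m → ψ (dotP ξ z) = 1) ↔ ‖z‖ ≤ (p : ℝ) ^ (-m) := by
  constructor
  · intro h
    by_contra hz
    push_neg at hz
    have hzpos : (0:ℝ) < ‖z‖ := lt_trans (zpow_pos p_pos (-m)) hz
    have hz0 : z ≠ 0 := by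
      intro h0; rw [h0, norm_zero] at hzpos; exact lt_irrefl 0 hzpos
    obtain ⟨i, hi⟩ := exists_norm_coord hn z
    have hzi : z i ≠ 0 := by
      intro h0; rw [h0, norm_zero] at hi; rw [← hi] at hzpos; exact lt_irrefl 0 hzpos
    obtain ⟨y, hy, hyne⟩ := hψ.2.2.2
    set ξ : Fin n → ℚ_[p] := Pi.single i (y / z i) with hξdef
    have hdot : dotP ξ z = y := by
      unfold dotP
      rw [Finset.sum_eq_single i]
      · rw [hξdef, Pi.single_eq_same, div_mul_cancel₀ _ hzi]
      · intro j _ hj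
        rw [hξdef, Pi.single_eq_of_ne hj, zero_mul]
      · intro hj; exact absurd (Finset.mem_univ i) hj
    -- norm of z via valuation
    have hv : ‖z‖ = (p:ℝ) ^ (-(z i).valuation) := by
      rw [← hi]; exact Padic.norm_eq_zpow_neg_valuation hzi
    have hvm : (z i).valuation + 1 ≤ m := by
      rw [hv] at hz
      have := (zpow_lt_zpow_iff_right₀ p_one_lt).mp hz
      omega
    have hξnorm : ‖ξ‖ ≤ (p:ℝ) ^ m := by
      rw [pi_norm_le_iff_of_nonneg (le_of_lt (zpow_pos p_pos m))]
      intro j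
      rcases eq_or_ne j i with rfl | hj
      · rw [hξdef, Pi.single_eq_same, norm_div, hy, Padic.norm_eq_zpow_neg_valuation hzi,
          div_le_iff₀ (zpow_pos p_pos _), ← zpow_add₀ (ne_of_gt p_pos)]
        calc (p:ℝ) = (p:ℝ) ^ (1:ℤ) := (zpow_one _).symm
          _ ≤ _ := zpow_le_zpow_right₀ (le_of_lt p_one_lt) (by omega)
      · rw [hξdef, Pi.single_eq_of_ne hj, norm_zero]
        exact le_of_lt (zpow_pos p_pos m)
    exact hyne (hdot ▸ h ξ hξnorm)
  · intro hz ξ hξ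
    apply hψ.2.2.1
    calc ‖dotP ξ z‖ ≤ ‖ξ‖ * ‖z‖ := norm_dotP_le ξ z
      _ ≤ (p:ℝ)^m * (p:ℝ)^(-m) :=
          mul_le_mul hξ hz (norm_nonneg _) (le_of_lt (zpow_pos p_pos m))
      _ = 1 := by rw [← zpow_add₀ (ne_of_gt p_pos), add_neg_cancel, zpow_zero]

variable (ψ) in
def dSet (Λ : AddSubgroup (Fin n → ℚ_[p])) : Set (Fin n → ℚ_[p]) :=
  {z | ∀ ξ ∈ Λ, ψ (dotP ξ z) = 1}

lemma dSet_isClosed (hψ : IsStdAddChar p ψ) (Λ : AddSubgroup (Fin n → ℚ_[p])) :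
    IsClosed (dSet ψ Λ) := by
  have : dSet ψ Λ = ⋂ ξ ∈ (Λ : Set (Fin n → ℚ_[p])), (fun z => ψ (dotP ξ z)) ⁻¹' {1} := by
    ext z; simp [dSet]
  rw [this]
  exact isClosed_biInter fun ξ _ =>
    (isClosed_singleton).preimage ((psi_cont hψ).comp (dotP_cont ξ))

lemma dSet_antitone {Λ Λ' : AddSubgroup (Fin n → ℚ_[p])} (h : Λ ≤ Λ') :
    dSet ψ Λ' ⊆ dSet ψ Λ := fun z hz ξ hξ => hz ξ (h hξ)

lemma dSet_Bgp (hn : n ≠ 0) (hψ : IsStdAddChar p ψ) (m : ℤ) :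
    dSet ψ (Bgp p n m) = Metric.closedBall 0 ((p : ℝ) ^ (-m)) := by
  ext z
  rw [Metric.mem_closedBall, dist_zero_right, ← mem_dual_ball hn hψ m z]
  constructor
  · intro h ξ hξ; exact h ξ (mem_Bgp_iff.mpr hξ)
  · intro h ξ hξ; exact h ξ (mem_Bgp_iff.mp hξ)

section Meas

variable [MeasurableSpace ℚ_[p]] [BorelSpace ℚ_[p]]
variable (μ : Measure (Fin n → ℚ_[p])) [μ.IsAddHaarMeasure]

lemma charInt_triv (Λ : AddSubgroup (Fin n → ℚ_[p]))
    (hmeas : MeasurableSet (Λ : Set (Fin n → ℚ_[p]))) (z : Fin n → ℚ_[p])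
    (h : ∀ ξ ∈ Λ, ψ (dotP ξ z) = 1) :
    ∫ ξ in (Λ : Set (Fin n → ℚ_[p])), ψ (dotP ξ z) ∂μ
      = ((μ (Λ : Set (Fin n → ℚ_[p]))).toReal : ℂ) := by
  rw [setIntegral_congr_fun hmeas (g := fun _ => (1:ℂ)) (fun ξ hξ => h ξ hξ),
    setIntegral_const]
  simp [measureReal_def]

lemma charInt_nontriv (Λ : AddSubgroup (Fin n → ℚ_[p])) (z : Fin n → ℚ_[p])
    (hψ : IsStdAddChar p ψ) (ξ₀ : Fin n → ℚ_[p]) (hξ₀ : ξ₀ ∈ Λ)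
    (hne : ψ (dotP ξ₀ z) ≠ 1) :
    ∫ ξ in (Λ : Set (Fin n → ℚ_[p])), ψ (dotP ξ z) ∂μ = 0 := by
  set c := ψ (dotP ξ₀ z) with hc
  set I := ∫ ξ in (Λ : Set (Fin n → ℚ_[p])), ψ (dotP ξ z) ∂μ with hI
  have hpre : (fun ξ => ξ + ξ₀) ⁻¹' (Λ : Set (Fin n → ℚ_[p])) = Λ := by
    ext t
    simp only [Set.mem_preimage, SetLike.mem_coe]
    exact ⟨fun h => by simpa using sub_mem h hξ₀, fun h => add_mem h hξ₀⟩
  have key : I = I * c := by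
    conv_lhs => rw [hI,
      ← (measurePreserving_add_right μ ξ₀).setIntegral_preimage_emb
        (measurableEmbedding_addRight ξ₀) (fun ξ => ψ (dotP ξ z)) Λ]
    rw [hpre]
    have : ∀ ξ : Fin n → ℚ_[p], ψ (dotP (ξ + ξ₀) z) = ψ (dotP ξ z) * c := by
      intro ξ; rw [dotP_add_left, hψ.1, hc]
    calc ∫ ξ in (Λ : Set (Fin n → ℚ_[p])), ψ (dotP (ξ + ξ₀) z) ∂μ
        = ∫ ξ in (Λ : Set (Fin n → ℚ_[p])), ψ (dotP ξ z) * c ∂μ := by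
          exact integral_congr_ae (Filter.Eventually.of_forall fun ξ => this ξ)
      _ = I * c := by rw [integral_mul_const]
  have : I * (c - 1) = 0 := by rw [mul_sub, mul_one, ← key, sub_self]
  rcases mul_eq_zero.mp this with h | h
  · exact h
  · exact absurd (sub_eq_zero.mp h) hne

lemma intOn_char (hψ : IsStdAddChar p ψ) {S : Set (Fin n → ℚ_[p])} (hS : IsCompact S)
    (z : Fin n → ℚ_[p]) : IntegrableOn (fun ξ => ψ (dotP ξ z)) S μ := by
  apply ContinuousOn.integrableOn_compact hS
  exact ((psi_cont hψ).comp (by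
    unfold dotP
    exact continuous_finset_sum _ fun i _ => (continuous_apply i).mul continuous_const)).continuousOn

lemma key_identity (hn : n ≠ 0) (hψ : IsStdAddChar p ψ) (Λ : AddSubgroup (Fin n → ℚ_[p]))
    (hΛc : IsCompact (Λ : Set (Fin n → ℚ_[p]))) (hΛo : IsOpen (Λ : Set (Fin n → ℚ_[p])))
    (M : ℤ) (hM : (Bgp p n (-M) : Set (Fin n → ℚ_[p])) ⊆ Λ) :
    (μ (Λ : Set (Fin n → ℚ_[p]))).toReal * (μ (dSet ψ Λ)).toReal
      = (μ (Bgp p n M : Set (Fin n → ℚ_[p]))).toReal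
        * (μ (Bgp p n (-M) : Set (Fin n → ℚ_[p]))).toReal := by
  classical
  set B : Set (Fin n → ℚ_[p]) := (Bgp p n M : Set (Fin n → ℚ_[p])) with hB
  have hBmeas : MeasurableSet B := (Bgp_isOpen M).measurableSet
  have hΛmeas : MeasurableSet (Λ : Set (Fin n → ℚ_[p])) := hΛo.measurableSet
  have hBc : IsCompact B := Bgp_isCompact M
  -- the double integral
  have hcont : Continuous fun q : (Fin n → ℚ_[p]) × (Fin n → ℚ_[p]) => ψ (dotP q.1 q.2) := by
    apply (psi_cont hψ).comp
    unfold dotP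
    exact continuous_finset_sum _ fun i _ =>
      ((continuous_apply i).comp continuous_fst).mul ((continuous_apply i).comp continuous_snd)
  haveI : IsFiniteMeasure (μ.restrict (Λ : Set (Fin n → ℚ_[p]))) :=
    ⟨by rw [Measure.restrict_apply_univ]; exact hΛc.measure_lt_top⟩
  haveI : IsFiniteMeasure (μ.restrict B) :=
    ⟨by rw [Measure.restrict_apply_univ]; exact hBc.measure_lt_top⟩
  have hint : Integrable (Function.uncurry fun ξ z => ψ (dotP ξ z))
      ((μ.restrict (Λ : Set (Fin n → ℚ_[p]))).prod (μ.restrict B)) := by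
    refine Integrable.mono' (integrable_const 1) hcont.aestronglyMeasurable ?_
    filter_upwards with q
    exact le_of_eq (psi_norm hψ _)
  have swap := integral_integral_swap hint
  -- evaluate LHS of swap
  have lhs_eval : ∫ ξ in (Λ : Set (Fin n → ℚ_[p])), ∫ z in B, ψ (dotP ξ z) ∂μ ∂μ
      = (μ B).toReal * (μ (Bgp p n (-M) : Set (Fin n → ℚ_[p]))).toReal := by
    have hpt : ∀ ξ : Fin n → ℚ_[p], ∫ z in B, ψ (dotP ξ z) ∂μ
        = (Bgp p n (-M) : Set (Fin n → ℚ_[p])).indicator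
            (fun _ => ((μ B).toReal : ℂ)) ξ := by
      intro ξ
      by_cases hξ : ξ ∈ Bgp p n (-M)
      · rw [Set.indicator_of_mem hξ]
        have h1 : ∀ z ∈ Bgp p n M, ψ (dotP z ξ) = 1 := by
          intro z hz
          exact (mem_dual_ball hn hψ M ξ).mpr (by simpa using mem_Bgp_iff.mp hξ) z
            (mem_Bgp_iff.mp hz)
        calc ∫ z in B, ψ (dotP ξ z) ∂μ = ∫ z in B, ψ (dotP z ξ) ∂μ := by
              refine integral_congr_ae (Filter.Eventually.of_forall fun z => ?_)
              simp only [dotP_comm ξ z]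
          _ = ((μ B).toReal : ℂ) := charInt_triv μ (Bgp p n M) hBmeas ξ h1
      · rw [Set.indicator_of_notMem hξ]
        have h2 : ¬ ∀ z : Fin n → ℚ_[p], ‖z‖ ≤ (p:ℝ)^M → ψ (dotP z ξ) = 1 := by
          intro hall
          exact hξ (mem_Bgp_iff.mpr (by
            simpa using (mem_dual_ball hn hψ M ξ).mp hall))
        push_neg at h2
        obtain ⟨z₀, hz₀, hz₀ne⟩ := h2
        calc ∫ z in B, ψ (dotP ξ z) ∂μ = ∫ z in B, ψ (dotP z ξ) ∂μ := by
              refine integral_congr_ae (Filter.Eventually.of_forall fun z => ?_)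
              simp only [dotP_comm ξ z]
          _ = 0 := charInt_nontriv μ (Bgp p n M) ξ hψ z₀ (mem_Bgp_iff.mpr hz₀) hz₀ne
    calc ∫ ξ in (Λ : Set (Fin n → ℚ_[p])), ∫ z in B, ψ (dotP ξ z) ∂μ ∂μ
        = ∫ ξ in (Λ : Set (Fin n → ℚ_[p])),
            (Bgp p n (-M) : Set (Fin n → ℚ_[p])).indicator
              (fun _ => ((μ B).toReal : ℂ)) ξ ∂μ := by
          exact integral_congr_ae (Filter.Eventually.of_forall fun ξ => hpt ξ)
      _ = ∫ ξ in (Λ : Set (Fin n → ℚ_[p])) ∩ (Bgp p n (-M) : Set (Fin n → ℚ_[p])),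
            ((μ B).toReal : ℂ) ∂μ := setIntegral_indicator (Bgp_isOpen (-M)).measurableSet
      _ = (μ B).toReal * (μ (Bgp p n (-M) : Set (Fin n → ℚ_[p]))).toReal := by
          rw [Set.inter_eq_right.mpr hM, setIntegral_const]
          rw [Complex.real_smul, measureReal_def]
          ring
  -- evaluate RHS of swap
  have rhs_eval : ∫ z in B, ∫ ξ in (Λ : Set (Fin n → ℚ_[p])), ψ (dotP ξ z) ∂μ ∂μ
      = (μ (Λ : Set (Fin n → ℚ_[p]))).toReal * (μ (dSet ψ Λ)).toReal := by
    have hpt : ∀ z : Fin n → ℚ_[p], ∫ ξ in (Λ : Set (Fin n → ℚ_[p])), ψ (dotP ξ z) ∂μ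
        = (dSet ψ Λ).indicator
            (fun _ => ((μ (Λ : Set (Fin n → ℚ_[p]))).toReal : ℂ)) z := by
      intro z
      by_cases hz : z ∈ dSet ψ Λ
      · rw [Set.indicator_of_mem hz]
        exact charInt_triv μ Λ hΛmeas z hz
      · rw [Set.indicator_of_notMem hz]
        have : ¬ ∀ ξ ∈ Λ, ψ (dotP ξ z) = 1 := hz
        push_neg at this
        obtain ⟨ξ₀, hξ₀, hξ₀ne⟩ := this
        exact charInt_nontriv μ Λ z hψ ξ₀ hξ₀ hξ₀ne
    have hDsub : dSet ψ Λ ⊆ B := by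
      have h1 : dSet ψ Λ ⊆ dSet ψ (Bgp p n (-M)) :=
        dSet_antitone (fun t ht => hM ht)
      rw [dSet_Bgp hn hψ (-M), neg_neg] at h1
      exact h1
    calc ∫ z in B, ∫ ξ in (Λ : Set (Fin n → ℚ_[p])), ψ (dotP ξ z) ∂μ ∂μ
        = ∫ z in B, (dSet ψ Λ).indicator
            (fun _ => ((μ (Λ : Set (Fin n → ℚ_[p]))).toReal : ℂ)) z ∂μ := by
          exact integral_congr_ae (Filter.Eventually.of_forall fun z => hpt z)
      _ = ∫ z in B ∩ dSet ψ Λ, ((μ (Λ : Set (Fin n → ℚ_[p]))).toReal : ℂ) ∂μ :=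
          setIntegral_indicator (dSet_isClosed hψ Λ).measurableSet
      _ = (μ (Λ : Set (Fin n → ℚ_[p]))).toReal * (μ (dSet ψ Λ)).toReal := by
          rw [Set.inter_eq_right.mpr hDsub, setIntegral_const, Complex.real_smul, measureReal_def]
          ring
  have := lhs_eval.symm.trans (swap.trans rhs_eval)
  exact_mod_cast this.symm

variable {f : (Fin n → ℚ_[p]) → ℂ}

omit [MeasurableSpace ℚ_[p]] [BorelSpace ℚ_[p]] in
lemma f_contAt (hf : f ∈ Cplus p n) {y : Fin n → ℚ_[p]} (hy : y ≠ 0) : ContinuousAt f y := by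
  obtain ⟨U, hU, hUeq⟩ := hf.1.2.1 y hy
  exact Filter.EventuallyEq.continuousAt
    (Filter.eventually_of_mem hU fun η hη => hUeq η hη)

omit [μ.IsAddHaarMeasure] in
lemma f_smeasurable (hf : f ∈ Cplus p n) : StronglyMeasurable f := by
  apply Measurable.stronglyMeasurable
  refine measurable_of_isOpen fun s hs => ?_
  have hco : ContinuousOn f {(0 : Fin n → ℚ_[p])}ᶜ :=
    fun y hy => (f_contAt hf hy).continuousWithinAt
  have h1 : IsOpen ({(0:Fin n → ℚ_[p])}ᶜ ∩ f ⁻¹' s) :=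
    hco.isOpen_inter_preimage isOpen_compl_singleton hs
  have h2 : MeasurableSet (({0} : Set (Fin n → ℚ_[p])) ∩ f ⁻¹' s) := by
    by_cases h0 : f 0 ∈ s
    · have : ({0} : Set (Fin n → ℚ_[p])) ∩ f ⁻¹' s = {0} := by
        ext y
        constructor
        · exact fun h => h.1
        · intro h
          rw [Set.mem_singleton_iff] at h
          exact ⟨h, by rw [Set.mem_preimage, h]; exact h0⟩
      rw [this]; exact measurableSet_singleton 0
    · have : ({0} : Set (Fin n → ℚ_[p])) ∩ f ⁻¹' s = ∅ := by
        ext y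
        simp only [Set.mem_inter_iff, Set.mem_singleton_iff, Set.mem_preimage,
          Set.mem_empty_iff_false, iff_false, not_and]
        intro h; rw [h]; exact h0
      rw [this]; exact MeasurableSet.empty
  have : f ⁻¹' s = ({(0:Fin n → ℚ_[p])}ᶜ ∩ f ⁻¹' s) ∪ (({0} : Set (Fin n → ℚ_[p])) ∩ f ⁻¹' s) := by
    ext y; by_cases hy : y = 0 <;> simp [hy]
  rw [this]
  exact h1.measurableSet.union h2

omit [MeasurableSpace ℚ_[p]] [BorelSpace ℚ_[p]] in
lemma f_bound (hf : f ∈ Cplus p n) {c : ℝ} (hc : 0 < c) :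
    ∃ C : ℝ, 0 ≤ C ∧ ∀ y : Fin n → ℚ_[p], c ≤ ‖y‖ → ‖f y‖ ≤ C := by
  obtain ⟨hfsp, R, hR, hsupp⟩ := hf
  set K : Set (Fin n → ℚ_[p]) := {y | c ≤ ‖y‖} ∩ Metric.closedBall 0 R with hK
  have hKcl : IsClosed K :=
    (isClosed_le continuous_const continuous_norm).inter Metric.isClosed_closedBall
  have hKcomp : IsCompact K :=
    (isCompact_closedBall (0 : Fin n → ℚ_[p]) R).of_isClosed_subset hKcl
      Set.inter_subset_right
  have hKco : ContinuousOn f K := by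
    intro y hy
    have : y ≠ 0 := by
      intro h0
      have h1 : c ≤ ‖y‖ := hy.1
      rw [h0, norm_zero] at h1
      exact absurd h1 (not_le.mpr hc)
    exact (f_contAt ⟨hfsp, R, hR, hsupp⟩ this).continuousWithinAt
  obtain ⟨C, hC⟩ := hKcomp.exists_bound_of_continuousOn hKco
  refine ⟨max C 0, le_max_right _ _, fun y hy => ?_⟩
  by_cases hyR : ‖y‖ ≤ R
  · exact (hC y ⟨hy, by rwa [Metric.mem_closedBall, dist_zero_right]⟩).trans (le_max_left _ _)
  · rw [hsupp y (not_le.mp hyR), norm_zero]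
    exact le_max_right _ _

lemma part1 (hψ : IsStdAddChar p ψ) (hf : f ∈ Cplus p n) (ξ : Fin n → ℚ_[p]) :
    Integrable (fun y : Fin n → ℚ_[p] => f y * (ψ (-(dotP ξ y)) - 1)) μ := by
  by_cases hξ0 : ξ = 0
  · have : (fun y : Fin n → ℚ_[p] => f y * (ψ (-(dotP ξ y)) - 1)) = fun _ => 0 := by
      funext y
      rw [hξ0]
      simp [dotP, psi_zero hψ]
    rw [this]
    exact integrable_zero _ _ _
  · have hξpos : 0 < ‖ξ‖ := norm_pos_iff.mpr hξ0
    have hε : 0 < ‖ξ‖⁻¹ := inv_pos.mpr hξpos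
    have hvanish : ∀ y : Fin n → ℚ_[p], ‖y‖ < ‖ξ‖⁻¹ → ψ (-(dotP ξ y)) - 1 = 0 := by
      intro y hy
      have h1 : ‖dotP ξ y‖ ≤ 1 := by
        calc ‖dotP ξ y‖ ≤ ‖ξ‖ * ‖y‖ := norm_dotP_le ξ y
          _ ≤ ‖ξ‖ * ‖ξ‖⁻¹ := by
              exact mul_le_mul_of_nonneg_left hy.le (norm_nonneg _)
          _ = 1 := mul_inv_cancel₀ (ne_of_gt hξpos)
      rw [hψ.2.2.1 _ (by rwa [norm_neg]), sub_self]
    have hcont : Continuous (fun y : Fin n → ℚ_[p] => f y * (ψ (-(dotP ξ y)) - 1)) := by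
      rw [continuous_iff_continuousAt]
      intro y₀
      by_cases hy₀ : ‖y₀‖ < ‖ξ‖⁻¹
      · apply Filter.EventuallyEq.continuousAt (y := 0)
        filter_upwards [(Metric.isOpen_ball (x := (0 : Fin n → ℚ_[p])) (ε := ‖ξ‖⁻¹)).mem_nhds
          (by rwa [Metric.mem_ball, dist_zero_right])] with y hy
        rw [hvanish y (by rwa [Metric.mem_ball, dist_zero_right] at hy), mul_zero]
      · have hy0 : y₀ ≠ 0 := by
          intro h
          rw [h, norm_zero] at hy₀
          exact hy₀ hε
        exact (f_contAt hf hy0).mul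
          ((((psi_cont hψ).comp ((dotP_cont ξ).neg)).continuousAt).sub continuousAt_const)
    obtain ⟨hfsp, R, hR, hsupp⟩ := hf
    apply hcont.integrable_of_hasCompactSupport
    apply HasCompactSupport.intro (isCompact_closedBall (0 : Fin n → ℚ_[p]) R)
    intro y hy
    rw [hsupp y (by rwa [Metric.mem_closedBall, dist_zero_right, not_le] at hy), zero_mul]

lemma mu_dual_one (hn : n ≠ 0) (hψ : IsStdAddChar p ψ)
    (hμ : μ (Metric.closedBall 0 1) = 1) (Λ : AddSubgroup (Fin n → ℚ_[p]))
    (hΛc : IsCompact (Λ : Set (Fin n → ℚ_[p]))) (hΛo : IsOpen (Λ : Set (Fin n → ℚ_[p]))) :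
    (μ (Λ : Set (Fin n → ℚ_[p]))).toReal * (μ (dSet ψ Λ)).toReal = 1 := by
  -- find a small ball inside Λ
  obtain ⟨ε, hε, hball⟩ := Metric.isOpen_iff.mp hΛo 0 (zero_mem Λ)
  have hpinv : (p:ℝ)⁻¹ < 1 := by
    rw [inv_lt_one_iff₀]; right; exact p_one_lt
  obtain ⟨k, hk⟩ := exists_pow_lt_of_lt_one hε hpinv
  set M : ℤ := (k : ℤ) with hM
  have hMpow : (p:ℝ) ^ (-M) < ε := by
    rw [hM, zpow_neg, zpow_natCast, ← inv_pow]
    exact hk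
  have hsub : (Bgp p n (-M) : Set (Fin n → ℚ_[p])) ⊆ Λ := by
    rw [Bgp_coe]
    exact (Metric.closedBall_subset_ball hMpow).trans hball
  have hsub0 : (Bgp p n (-M) : Set (Fin n → ℚ_[p])) ⊆ (Bgp p n 0 : Set (Fin n → ℚ_[p])) := by
    rw [Bgp_coe, Bgp_coe]
    apply Metric.closedBall_subset_closedBall
    rw [zpow_zero]
    rw [zpow_neg, zpow_natCast]
    exact inv_le_one_of_one_le₀ (one_le_pow₀ (le_of_lt p_one_lt))
  have h1 := key_identity μ hn hψ Λ hΛc hΛo M hsub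
  have h2 := key_identity μ hn hψ (Bgp p n 0) (Bgp_isCompact 0) (Bgp_isOpen 0) M hsub0
  have hB0 : (Bgp p n (0:ℤ) : Set (Fin n → ℚ_[p])) = Metric.closedBall 0 1 := by
    rw [Bgp_coe, zpow_zero]
  have hd0 : dSet ψ (Bgp p n (0:ℤ)) = Metric.closedBall 0 1 := by
    rw [dSet_Bgp hn hψ 0, neg_zero, zpow_zero]
  rw [hB0, hd0, hμ] at h2
  simp only [ENNReal.toReal_one, one_mul] at h2
  rw [h1, ← h2]

end Meas

end S5

theorem stmt_5 (p : ℕ) [Fact p.Prime] (n : ℕ) (hn : 2 ≤ n)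
    [MeasurableSpace ℚ_[p]] [BorelSpace ℚ_[p]]
    (μ : Measure (Fin n → ℚ_[p])) [μ.IsAddHaarMeasure]
    (hμ : μ (Metric.closedBall 0 1) = 1)
    (ψ : ℚ_[p] → ℂ) (hψ : IsStdAddChar p ψ)
    (f : (Fin n → ℚ_[p]) → ℂ) (hf : f ∈ Cplus p n) :
    -- the integral defining F'f converges absolutely
    (∀ ξ : Fin n → ℚ_[p],
      Integrable (fun y : Fin n → ℚ_[p] => f y * (ψ (-(∑ i, ξ i * y i)) - 1)) μ) ∧
    -- Fourier inversion for F'f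
    (∀ x : Fin n → ℚ_[p], x ≠ 0 →
      ∃ Λ₀ : AddSubgroup (Fin n → ℚ_[p]),
        IsCompact (Λ₀ : Set (Fin n → ℚ_[p])) ∧ IsOpen (Λ₀ : Set (Fin n → ℚ_[p])) ∧
        ∀ Λ : AddSubgroup (Fin n → ℚ_[p]),
          IsCompact (Λ : Set (Fin n → ℚ_[p])) → IsOpen (Λ : Set (Fin n → ℚ_[p])) → Λ₀ ≤ Λ →
            ∫ ξ in (Λ : Set (Fin n → ℚ_[p])),
              (∫ y : Fin n → ℚ_[p], f y * (ψ (-(∑ i, ξ i * y i)) - 1) ∂μ) *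
                ψ (∑ i, ξ i * x i) ∂μ = f x) := by
  obtain ⟨hfsp, R, hR, hsupp⟩ := hf
  have hf' : f ∈ Cplus p n := ⟨hfsp, R, hR, hsupp⟩
  have hn0 : n ≠ 0 := by omega
  constructor
  · intro ξ
    exact S5.part1 μ hψ hf' ξ
  · intro x hx
    obtain ⟨U, hU, hUeq⟩ := hfsp.2.1 x hx
    obtain ⟨δ, hδ, hballU⟩ := Metric.mem_nhds_iff.mp hU
    have hxpos : 0 < ‖x‖ := norm_pos_iff.mpr hx
    have hpinv : (p:ℝ)⁻¹ < 1 := by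
      rw [inv_lt_one_iff₀]; right; exact S5.p_one_lt
    obtain ⟨k, hk⟩ := exists_pow_lt_of_lt_one (lt_min hδ hxpos) hpinv
    set m : ℤ := (k : ℤ) with hm
    have hpm : (p:ℝ) ^ (-m) < min δ ‖x‖ := by
      rw [hm, zpow_neg, zpow_natCast, ← inv_pow]
      exact hk
    have hpmδ : (p:ℝ) ^ (-m) < δ := hpm.trans_le (min_le_left _ _)
    have hpmx : (p:ℝ) ^ (-m) < ‖x‖ := hpm.trans_le (min_le_right _ _)
    have hconst : ∀ y : Fin n → ℚ_[p], ‖y - x‖ ≤ (p:ℝ) ^ (-m) → f y = f x := by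
      intro y hy
      exact hUeq y (hballU (by rw [Metric.mem_ball, dist_eq_norm]; exact lt_of_le_of_lt hy hpmδ))
    refine ⟨S5.Bgp p n m, S5.Bgp_isCompact m, S5.Bgp_isOpen m, ?_⟩
    intro Λ hΛc hΛo hΛ₀
    have hΛmeas : MeasurableSet (Λ : Set (Fin n → ℚ_[p])) := hΛo.measurableSet
    haveI : IsFiniteMeasure (μ.restrict (Λ : Set (Fin n → ℚ_[p]))) :=
      ⟨by rw [Measure.restrict_apply_univ]; exact hΛc.measure_lt_top⟩
    set D : Set (Fin n → ℚ_[p]) := S5.dSet ψ Λ with hD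
    have hDclosed : IsClosed D := S5.dSet_isClosed hψ Λ
    have hDmeas : MeasurableSet D := hDclosed.measurableSet
    have hDsub : D ⊆ Metric.closedBall 0 ((p:ℝ) ^ (-m)) := by
      rw [hD, ← S5.dSet_Bgp hn0 hψ m]
      exact S5.dSet_antitone hΛ₀
    -- a character nontrivial at x
    obtain ⟨ξ₁, hξ₁n, hξ₁ne⟩ : ∃ ξ₁ : Fin n → ℚ_[p], ‖ξ₁‖ ≤ (p:ℝ)^m ∧ ψ (S5.dotP ξ₁ x) ≠ 1 := by
      by_contra h
      push_neg at h
      exact (not_le.mpr hpmx) ((S5.mem_dual_ball hn0 hψ m x).mp h)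
    have hξ₁Λ : ξ₁ ∈ Λ := hΛ₀ (S5.mem_Bgp_iff.mpr hξ₁n)
    set H : ((Fin n → ℚ_[p]) × (Fin n → ℚ_[p])) → ℂ :=
      fun q => f q.2 * (ψ (S5.dotP q.1 (x - q.2)) - ψ (S5.dotP q.1 x)) with hH
    have hptid : ∀ ξ y : Fin n → ℚ_[p],
        H (ξ, y) = (f y * (ψ (-(S5.dotP ξ y)) - 1)) * ψ (S5.dotP ξ x) := by
      intro ξ y
      rw [hH]
      show f y * (ψ (S5.dotP ξ (x - y)) - ψ (S5.dotP ξ x)) = _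
      rw [S5.dotP_sub_right, S5.psi_sub hψ]
      ring
    -- integrability of each slice
    have hslice : ∀ ξ : Fin n → ℚ_[p], Integrable (fun y => H (ξ, y)) μ := by
      intro ξ
      have : (fun y => H (ξ, y))
          = fun y => (f y * (ψ (-(S5.dotP ξ y)) - 1)) * ψ (S5.dotP ξ x) :=
        funext fun y => hptid ξ y
      rw [this]
      exact (S5.part1 μ hψ hf' ξ).mul_const _
    -- product integrability
    obtain ⟨r₀, hr₀⟩ := hΛc.isBounded.subset_closedBall (0 : Fin n → ℚ_[p])
    set r : ℝ := max r₀ 1 with hr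
    have hrpos : 0 < r := lt_of_lt_of_le one_pos (le_max_right _ _)
    have hΛr : (Λ : Set (Fin n → ℚ_[p])) ⊆ Metric.closedBall 0 r :=
      hr₀.trans (Metric.closedBall_subset_closedBall (le_max_left _ _))
    obtain ⟨C, hC0, hCb⟩ := S5.f_bound hf' (inv_pos.mpr hrpos)
    set K : Set (Fin n → ℚ_[p]) := {y | r⁻¹ ≤ ‖y‖} ∩ Metric.closedBall 0 R with hK
    have hKmeas : MeasurableSet K :=
      ((isClosed_le continuous_const continuous_norm).inter Metric.isClosed_closedBall).measurableSet
    have hKcomp : IsCompact K :=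
      (isCompact_closedBall (0 : Fin n → ℚ_[p]) R).of_isClosed_subset
        ((isClosed_le continuous_const continuous_norm).inter Metric.isClosed_closedBall)
        Set.inter_subset_right
    set G : (Fin n → ℚ_[p]) → ℝ := K.indicator (fun _ => 2 * C) with hG
    have hGint : Integrable G μ := by
      rw [hG, integrable_indicator_iff hKmeas]
      exact (integrableOn_const_iff).mpr (Or.inr hKcomp.measure_lt_top)
    have hGnonneg : ∀ y, 0 ≤ G y :=
      fun y => Set.indicator_nonneg (fun _ _ => by positivity) y
    have hHbound : ∀ ξ ∈ Λ, ∀ y : Fin n → ℚ_[p], ‖H (ξ, y)‖ ≤ G y := by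
      intro ξ hξ y
      have hξr : ‖ξ‖ ≤ r := by
        have := hΛr hξ
        rwa [Metric.mem_closedBall, dist_zero_right] at this
      by_cases h1 : ‖y‖ < r⁻¹
      · have hsmall : ψ (-(S5.dotP ξ y)) = 1 := by
          apply hψ.2.2.1
          rw [norm_neg]
          calc ‖S5.dotP ξ y‖ ≤ ‖ξ‖ * ‖y‖ := S5.norm_dotP_le ξ y
            _ ≤ r * ‖y‖ := mul_le_mul_of_nonneg_right hξr (norm_nonneg _)
            _ ≤ r * r⁻¹ := le_of_lt (mul_lt_mul_of_pos_left h1 hrpos)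
            _ = 1 := mul_inv_cancel₀ (ne_of_gt hrpos)
        rw [hptid ξ y, hsmall, sub_self, mul_zero, zero_mul, norm_zero]
        exact hGnonneg y
      · by_cases h2 : ‖y‖ ≤ R
        · have hyK : y ∈ K := ⟨not_lt.mp h1, by rwa [Metric.mem_closedBall, dist_zero_right]⟩
          rw [hG, Set.indicator_of_mem hyK, hH]
          show ‖f y * (ψ (S5.dotP ξ (x - y)) - ψ (S5.dotP ξ x))‖ ≤ 2 * C
          rw [norm_mul]
          calc ‖f y‖ * ‖ψ (S5.dotP ξ (x - y)) - ψ (S5.dotP ξ x)‖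
              ≤ C * 2 := by
                apply mul_le_mul (hCb y (not_lt.mp h1)) ?_ (norm_nonneg _) hC0
                calc ‖ψ (S5.dotP ξ (x - y)) - ψ (S5.dotP ξ x)‖
                    ≤ ‖ψ (S5.dotP ξ (x - y))‖ + ‖ψ (S5.dotP ξ x)‖ := norm_sub_le _ _
                  _ = 2 := by rw [S5.psi_norm hψ, S5.psi_norm hψ]; norm_num
            _ = 2 * C := by ring
        · rw [hH]
          show ‖f y * (ψ (S5.dotP ξ (x - y)) - ψ (S5.dotP ξ x))‖ ≤ G y
          rw [hsupp y (not_le.mp h2), zero_mul, norm_zero]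
          exact hGnonneg y
    have hAESM : AEStronglyMeasurable H ((μ.restrict (Λ : Set (Fin n → ℚ_[p]))).prod μ) := by
      have hsm1 : StronglyMeasurable fun q : (Fin n → ℚ_[p]) × (Fin n → ℚ_[p]) => f q.2 :=
        (S5.f_smeasurable hf').comp_measurable measurable_snd
      have hd1 : Continuous fun q : (Fin n → ℚ_[p]) × (Fin n → ℚ_[p]) =>
          S5.dotP q.1 (x - q.2) := by
        unfold S5.dotP
        apply continuous_finset_sum
        intro i _
        simp only [Pi.sub_apply]
        exact ((continuous_apply i).comp continuous_fst).mul
          (continuous_const.sub ((continuous_apply i).comp continuous_snd))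
      have hd2 : Continuous fun q : (Fin n → ℚ_[p]) × (Fin n → ℚ_[p]) => S5.dotP q.1 x := by
        unfold S5.dotP
        apply continuous_finset_sum
        intro i _
        exact ((continuous_apply i).comp continuous_fst).mul continuous_const
      have hc2 : Continuous fun q : (Fin n → ℚ_[p]) × (Fin n → ℚ_[p]) =>
          ψ (S5.dotP q.1 (x - q.2)) - ψ (S5.dotP q.1 x) :=
        ((S5.psi_cont hψ).comp hd1).sub ((S5.psi_cont hψ).comp hd2)
      exact hsm1.aestronglyMeasurable.mul hc2.aestronglyMeasurable
    have hHint : Integrable H ((μ.restrict (Λ : Set (Fin n → ℚ_[p]))).prod μ) := by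
      refine (integrable_prod_iff hAESM).mpr ⟨Filter.Eventually.of_forall fun ξ => hslice ξ, ?_⟩
      refine Integrable.mono' (integrable_const ((2 * C) * (μ K).toReal))
        hAESM.norm.integral_prod_right' ?_
      filter_upwards [ae_restrict_mem hΛmeas] with ξ hξ
      rw [Real.norm_eq_abs, abs_of_nonneg (integral_nonneg fun y => norm_nonneg _)]
      calc ∫ y, ‖H (ξ, y)‖ ∂μ ≤ ∫ y, G y ∂μ :=
            integral_mono (hslice ξ).norm hGint (fun y => hHbound ξ hξ y)
        _ = (2 * C) * (μ K).toReal := by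
            rw [hG, integral_indicator hKmeas, setIntegral_const, smul_eq_mul, measureReal_def]
            ring
    -- the set S
    set S : Set (Fin n → ℚ_[p]) := (fun y => x - y) ⁻¹' D with hS
    have hScont : Continuous fun y : Fin n → ℚ_[p] => x - y :=
      continuous_const.sub continuous_id
    have hSmeas : MeasurableSet S := (hDclosed.preimage hScont).measurableSet
    have hmp : MeasurePreserving (fun y : Fin n → ℚ_[p] => x - y) μ μ := by
      have h2 := (measurePreserving_add_left μ x).comp (Measure.measurePreserving_neg μ)
      have : ((fun t => x + t) ∘ Neg.neg) = fun y : Fin n → ℚ_[p] => x - y := by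
        funext y; simp [sub_eq_add_neg]
      rwa [this] at h2
    have hμS : μ S = μ D := hmp.measure_preimage hDmeas.nullMeasurableSet
    -- main computation
    calc ∫ ξ in (Λ : Set (Fin n → ℚ_[p])),
          (∫ y : Fin n → ℚ_[p], f y * (ψ (-(∑ i, ξ i * y i)) - 1) ∂μ)
            * ψ (∑ i, ξ i * x i) ∂μ
        = ∫ ξ in (Λ : Set (Fin n → ℚ_[p])), ∫ y, H (ξ, y) ∂μ ∂μ := by
          refine integral_congr_ae (Filter.Eventually.of_forall fun ξ => ?_)
          dsimp only
          rw [← integral_mul_const]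
          refine integral_congr_ae (Filter.Eventually.of_forall fun y => ?_)
          dsimp only
          rw [hptid ξ y]
          simp only [S5.dotP]
      _ = ∫ y, ∫ ξ in (Λ : Set (Fin n → ℚ_[p])), H (ξ, y) ∂μ ∂μ := by
          exact integral_integral_swap (f := fun ξ y => H (ξ, y)) hHint
      _ = ∫ y, S.indicator
            (fun y => (((μ (Λ : Set (Fin n → ℚ_[p]))).toReal : ℂ)) * f y) y ∂μ := by
          refine integral_congr_ae (Filter.Eventually.of_forall fun y => ?_)
          dsimp only
          have hmulid : (fun ξ => H (ξ, y))
              = fun ξ => f y * (ψ (S5.dotP ξ (x - y)) - ψ (S5.dotP ξ x)) := rfl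
          rw [hmulid]
          have h1 : ∫ ξ in (Λ : Set (Fin n → ℚ_[p])),
              f y * (ψ (S5.dotP ξ (x - y)) - ψ (S5.dotP ξ x)) ∂μ
              = f y * ((∫ ξ in (Λ : Set (Fin n → ℚ_[p])), ψ (S5.dotP ξ (x - y)) ∂μ)
                - ∫ ξ in (Λ : Set (Fin n → ℚ_[p])), ψ (S5.dotP ξ x) ∂μ) := by
            rw [← integral_sub (S5.intOn_char μ hψ hΛc _) (S5.intOn_char μ hψ hΛc _),
              integral_const_mul]
          rw [h1, S5.charInt_nontriv μ Λ x hψ ξ₁ hξ₁Λ hξ₁ne, sub_zero]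
          by_cases hy : x - y ∈ D
          · rw [S5.charInt_triv μ Λ hΛmeas (x - y) hy,
              Set.indicator_of_mem (show y ∈ S from hy)]
            ring
          · have hy' : ¬ ∀ ξ ∈ Λ, ψ (S5.dotP ξ (x - y)) = 1 := hy
            push_neg at hy'
            obtain ⟨ξ₂, hξ₂, hξ₂ne⟩ := hy'
            rw [S5.charInt_nontriv μ Λ (x - y) hψ ξ₂ hξ₂ hξ₂ne,
              Set.indicator_of_notMem (show y ∉ S from hy)]
            ring
      _ = ∫ y in S, (((μ (Λ : Set (Fin n → ℚ_[p]))).toReal : ℂ)) * f y ∂μ :=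
          integral_indicator hSmeas
      _ = ∫ y in S, (((μ (Λ : Set (Fin n → ℚ_[p]))).toReal : ℂ)) * f x ∂μ := by
          refine setIntegral_congr_fun hSmeas (fun y hy => ?_)
          have hxy : x - y ∈ D := hy
          have : ‖y - x‖ ≤ (p:ℝ) ^ (-m) := by
            rw [norm_sub_rev]
            have := hDsub hxy
            rwa [Metric.mem_closedBall, dist_zero_right] at this
          rw [hconst y this]
      _ = (μ S).toReal • ((((μ (Λ : Set (Fin n → ℚ_[p]))).toReal : ℂ)) * f x) :=
          setIntegral_const _
      _ = f x := by
          rw [hμS, Complex.real_smul]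
          have hone := S5.mu_dual_one μ hn0 hψ hμ Λ hΛc hΛo
          have : ((μ (Λ : Set (Fin n → ℚ_[p]))).toReal : ℂ) * ((μ D).toReal : ℂ) = 1 := by
            rw [← Complex.ofReal_mul, hone, Complex.ofReal_one]
          calc ((μ D).toReal : ℂ) * (((μ (Λ : Set (Fin n → ℚ_[p]))).toReal : ℂ) * f x)
              = (((μ (Λ : Set (Fin n → ℚ_[p]))).toReal : ℂ) * ((μ D).toReal : ℂ)) * f x := by
                ring
            _ = f x := by rw [this, one_mul]
end
end

section
/- Let f : ℝ^n → ℂ be a measurable function and suppose there exist constants C > 0 and σ > n − 1 such that |f(x)| ≤ C·‖x‖^{−σ} for all x with ‖x‖ ≥ 1. Then there exists a constant C' > 0 such that for every ω ∈ ℝ^n with ‖ω‖ = 1 and every real t with |t| ≥ 1: ∫_{{x : ⟨ω,x⟩ = t}} |f(x)| dH^{n−1}(x) ≤ C'·|t|^{n−1−σ}. -/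
/-!
Parametrize the hyperplane `⟪ω, x⟫ = t` isometrically by `ℝⁿ⁻¹` through `y ↦ t • ω + L y`, with
`L` a linear isometry onto `ωᗮ`. Hausdorff measure is invariant under isometries, so the integral
becomes one over `ℝⁿ⁻¹` against `μH[n - 1]`, which is a Haar measure there. Since
`‖t • ω + L y‖² = t² + ‖y‖² ≥ 1`, the decay hypothesis bounds the integrand by
`C (t² + ‖y‖²) ^ (-σ / 2)`, and the substitution `y = |t| • z` turns its integral into
`|t| ^ (n - 1 - σ) ∫ (1 + ‖z‖²) ^ (-σ / 2)`, which is finite because `σ > n - 1`.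
-/

open MeasureTheory Set Module

section Scaling

variable {E : Type*} [NormedAddCommGroup E] [NormedSpace ℝ E]

theorem sq_add_norm_sq_rpow_eq (σ : ℝ) {t : ℝ} (ht : t ≠ 0) (y : E) :
    (t ^ 2 + ‖y‖ ^ 2) ^ (-σ / 2) = |t| ^ (-σ) * (1 + ‖|t|⁻¹ • y‖ ^ 2) ^ (-σ / 2) := by
  have htpos : 0 < |t| := abs_pos.mpr ht
  have hsplit : t ^ 2 + ‖y‖ ^ 2 = |t| ^ 2 * (1 + ‖|t|⁻¹ • y‖ ^ 2) := by
    rw [norm_smul, norm_inv, Real.norm_eq_abs, abs_abs, mul_pow, sq_abs]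
    field_simp
    rw [sq_abs]
    ring
  rw [hsplit, Real.mul_rpow (by positivity) (by positivity), ← Real.rpow_natCast,
    ← Real.rpow_mul htpos.le]
  congr 2
  push_cast
  ring

variable [FiniteDimensional ℝ E] [MeasurableSpace E] [BorelSpace E]
  (μ : Measure E) [μ.IsAddHaarMeasure]

theorem lintegral_comp_smul_addHaar (g : E → ENNReal) {r : ℝ} (hr : r ≠ 0) :
    ∫⁻ x, g (r • x) ∂μ = ENNReal.ofReal |(r ^ finrank ℝ E)⁻¹| * ∫⁻ x, g x ∂μ := by
  rw [← (measurableEmbedding_const_smul₀ hr).lintegral_map, Measure.map_addHaar_smul μ hr,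
    lintegral_smul_measure, smul_eq_mul]

theorem lintegral_sq_add_norm_sq_rpow {σ : ℝ} {t : ℝ} (ht : t ≠ 0) :
    ∫⁻ y, ENNReal.ofReal ((t ^ 2 + ‖y‖ ^ 2) ^ (-σ / 2)) ∂μ =
      ENNReal.ofReal (|t| ^ ((finrank ℝ E : ℝ) - σ)) *
        ∫⁻ z, ENNReal.ofReal ((1 + ‖z‖ ^ 2) ^ (-σ / 2)) ∂μ := by
  have htpos : 0 < |t| := abs_pos.mpr ht
  simp_rw [sq_add_norm_sq_rpow_eq σ ht, ENNReal.ofReal_mul (Real.rpow_nonneg htpos.le _)]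
  rw [lintegral_const_mul' _ _ ENNReal.ofReal_ne_top,
    lintegral_comp_smul_addHaar μ (fun z => ENNReal.ofReal ((1 + ‖z‖ ^ 2) ^ (-σ / 2)))
      (inv_ne_zero htpos.ne'), ← mul_assoc, ← ENNReal.ofReal_mul (by positivity)]
  congr 2
  rw [inv_pow, inv_inv, abs_pow, abs_abs, Real.rpow_sub htpos, Real.rpow_neg htpos.le,
    Real.rpow_natCast]
  field_simp

end Scaling

theorem Isometry.setLIntegral_range_hausdorffMeasure {X Y : Type*} [MetricSpace X] [CompleteSpace X]
    [MeasurableSpace X] [BorelSpace X] [EMetricSpace Y] [MeasurableSpace Y] [BorelSpace Y]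
    {φ : X → Y} (hφ : Isometry φ) {d : ℝ} (hd : 0 ≤ d) (g : Y → ENNReal) :
    ∫⁻ x in range φ, g x ∂μH[d] = ∫⁻ y, g (φ y) ∂μH[d] := by
  rw [← hφ.map_hausdorffMeasure (Or.inl hd), hφ.isClosedEmbedding.measurableEmbedding.lintegral_map]

section Hyperplane

variable {E : Type*} [NormedAddCommGroup E] [InnerProductSpace ℝ E] {m : ℕ}

theorem exists_isometry_range_eq_setOf_inner_eq (hE : finrank ℝ E = m + 1) {ω : E}
    (hω : ‖ω‖ = 1) (t : ℝ) :
    ∃ φ : EuclideanSpace ℝ (Fin m) → E, Isometry φ ∧ range φ = {x | inner ℝ ω x = t} ∧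
      ∀ y, ‖φ y‖ ^ 2 = t ^ 2 + ‖y‖ ^ 2 := by
  have : Fact (finrank ℝ E = m + 1) := ⟨hE⟩
  have hω0 : ω ≠ 0 := norm_ne_zero_iff.mp (by simp [hω])
  set L := (OrthonormalBasis.fromOrthogonalSpanSingleton (𝕜 := ℝ) m hω0).repr.symm
  have hL : ∀ y, inner ℝ ω (L y : E) = 0 := fun y =>
    Submodule.mem_orthogonal_singleton_iff_inner_right.mp (L y).2
  refine ⟨fun y => t • ω + L y, (isometry_add_left _).comp
    ((Submodule.subtypeₗᵢ _).isometry.comp L.isometry), ?_, fun y => ?_⟩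
  · ext x
    constructor
    · rintro ⟨y, rfl⟩
      simp [inner_add_right, real_inner_smul_right, hL, hω]
    · intro hx
      have hmem : x - t • ω ∈ (ℝ ∙ ω)ᗮ := by
        rw [Submodule.mem_orthogonal_singleton_iff_inner_right, inner_sub_right,
          real_inner_smul_right, real_inner_self_eq_norm_sq, hω, hx.out]
        ring
      exact ⟨L.symm ⟨x - t • ω, hmem⟩, by simp⟩
  · rw [norm_add_sq_real, real_inner_smul_left, hL, norm_smul, Real.norm_eq_abs, hω,
      Submodule.norm_coe, L.norm_map]
    ring_nf
    rw [sq_abs]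

theorem setLIntegral_inner_eq_le_of_norm_le_rpow_neg [MeasurableSpace E] [BorelSpace E]
    (hE : finrank ℝ E = m + 1) {F : Type*} [NormedAddCommGroup F] {f : E → F} {C σ : ℝ}
    (hC : 0 ≤ C) (hbound : ∀ x : E, 1 ≤ ‖x‖ → ‖f x‖ ≤ C * ‖x‖ ^ (-σ)) {ω : E} (hω : ‖ω‖ = 1)
    {t : ℝ} (ht : 1 ≤ |t|) :
    ∫⁻ x in {x | inner ℝ ω x = t}, ‖f x‖ₑ ∂μH[m] ≤
      ENNReal.ofReal C *
        ∫⁻ y : EuclideanSpace ℝ (Fin m), ENNReal.ofReal ((t ^ 2 + ‖y‖ ^ 2) ^ (-σ / 2)) ∂μH[m] := by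
  obtain ⟨φ, hφ, hrange, hnorm⟩ := exists_isometry_range_eq_setOf_inner_eq hE hω t
  rw [← hrange, hφ.setLIntegral_range_hausdorffMeasure m.cast_nonneg,
    ← lintegral_const_mul' _ _ ENNReal.ofReal_ne_top]
  refine lintegral_mono fun y => ?_
  have hφy : 1 ≤ ‖φ y‖ := by
    have : 1 ≤ ‖φ y‖ ^ 2 := by nlinarith [hnorm y, sq_abs t, norm_nonneg y]
    simpa using (one_le_sq_iff_one_le_abs _).mp this
  have hpow : ‖φ y‖ ^ (-σ) = (t ^ 2 + ‖y‖ ^ 2) ^ (-σ / 2) := by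
    rw [← hnorm y, ← Real.rpow_natCast, ← Real.rpow_mul (norm_nonneg _)]
    ring_nf
  calc ‖f (φ y)‖ₑ = ENNReal.ofReal ‖f (φ y)‖ := (ofReal_norm _).symm
    _ ≤ ENNReal.ofReal (C * (t ^ 2 + ‖y‖ ^ 2) ^ (-σ / 2)) :=
      ENNReal.ofReal_le_ofReal (hpow ▸ hbound _ hφy)
    _ = _ := ENNReal.ofReal_mul hC

end Hyperplane

theorem stmt_13_general (n : ℕ) (hn : 2 ≤ n)
    (f : EuclideanSpace ℝ (Fin n) → ℂ)
    (C : ℝ) (hC : 0 < C) (σ : ℝ) (hσ : (n : ℝ) - 1 < σ)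
    (hbound : ∀ x : EuclideanSpace ℝ (Fin n), 1 ≤ ‖x‖ → ‖f x‖ ≤ C * ‖x‖ ^ (-σ)) :
    ∃ C' > (0 : ℝ), ∀ ω : EuclideanSpace ℝ (Fin n), ‖ω‖ = 1 → ∀ t : ℝ, 1 ≤ |t| →
      ∫⁻ x in {x : EuclideanSpace ℝ (Fin n) | (inner ℝ ω x : ℝ) = t},
          (‖f x‖₊ : ENNReal) ∂(μH[(n : ℝ) - 1]) ≤
        ENNReal.ofReal (C' * |t| ^ ((n : ℝ) - 1 - σ)) := by
  obtain ⟨m, rfl⟩ : ∃ m, n = m + 1 := ⟨n - 1, by omega⟩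
  have hdim : ((m + 1 : ℕ) : ℝ) - 1 = m := by push_cast; ring
  rw [hdim] at hσ ⊢
  set J := ∫⁻ z : EuclideanSpace ℝ (Fin m), ENNReal.ofReal ((1 + ‖z‖ ^ 2) ^ (-σ / 2)) ∂μH[m]
    with hJ_def
  have hJ : J ≠ ⊤ := (Integrable.lintegral_lt_top
    (integrable_rpow_neg_one_add_norm_sq (by rwa [finrank_euclideanSpace_fin]))).ne
  refine ⟨C * J.toReal + 1, by positivity, fun ω hω t ht => ?_⟩
  have ht0 : t ≠ 0 := by rintro rfl; norm_num at ht
  calc _ ≤ _ := setLIntegral_inner_eq_le_of_norm_le_rpow_neg (by simp) hC.le hbound hω ht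
    _ = ENNReal.ofReal (C * J.toReal * |t| ^ ((m : ℝ) - σ)) := by
      rw [lintegral_sq_add_norm_sq_rpow _ ht0, finrank_euclideanSpace_fin, ← hJ_def,
        ENNReal.ofReal_mul (by positivity), ENNReal.ofReal_mul hC.le, ENNReal.ofReal_toReal hJ]
      ring
    _ ≤ _ := ENNReal.ofReal_le_ofReal (by gcongr; linarith)

theorem stmt_13 (n : ℕ) (hn : 2 ≤ n)
    (f : EuclideanSpace ℝ (Fin n) → ℂ) (hf : Measurable f)
    (C : ℝ) (hC : 0 < C) (σ : ℝ) (hσ : (n : ℝ) - 1 < σ)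
    (hbound : ∀ x : EuclideanSpace ℝ (Fin n), 1 ≤ ‖x‖ → ‖f x‖ ≤ C * ‖x‖ ^ (-σ)) :
    ∃ C' > (0 : ℝ), ∀ ω : EuclideanSpace ℝ (Fin n), ‖ω‖ = 1 → ∀ t : ℝ, 1 ≤ |t| →
      ∫⁻ x in {x : EuclideanSpace ℝ (Fin n) | (inner ℝ ω x : ℝ) = t},
          (‖f x‖₊ : ENNReal) ∂(μH[(n : ℝ) - 1]) ≤
        ENNReal.ofReal (C' * |t| ^ ((n : ℝ) - 1 - σ)) :=
  stmt_13_general n hn f C hC σ hσ hbound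
end
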